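/- arXiv:1404.6636 — 9 statements merged into one kernel-verified Lean document; each statement's English description precedes it below -/
import Mathlib

section
/- Let c > 0, β > 0, m > 0, and let v : [0,∞) → ℝ be a differentiable solution of m v'(t) = -(β²/(2c)) · v(t)/(c² - v(t)²) with |v(0)| < c. Then |v(t)| < c for all t ≥ 0. -/
/-- If `m v' = -(β²/(2c)) v/(c² - v²)` on `[0,∞)` with `|v 0| < c`,
then `|v t| < c` for all `t ≥ 0`. -/
theorem stmt_0 (c β m : ℝ) (hc : 0 < c) (hβ : 0 < β) (hm : 0 < m)
    (v : ℝ → ℝ)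
    (hv : ∀ t ∈ Set.Ici (0:ℝ),
      HasDerivAt v (-(β^2/(2*c)) * (v t / (c^2 - (v t)^2)) / m) t)
    (h0 : |v 0| < c) :
    ∀ t ∈ Set.Ici (0:ℝ), |v t| < c := by
  by_contra hcon
  push_neg at hcon
  obtain ⟨t₀, ht₀, hct₀⟩ := hcon
  set A : Set ℝ := {t : ℝ | 0 ≤ t ∧ c ≤ |v t|} with hA
  have hcont : ∀ t : ℝ, 0 ≤ t → ContinuousAt v t := fun t ht =>
    (hv t ht).continuousAt
  have hAne : A.Nonempty := ⟨t₀, ht₀, hct₀⟩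
  have hbdd : BddBelow A := ⟨0, fun t ht => ht.1⟩
  set T := sInf A with hT
  have hTA : T ∈ A := by
    have hclosed : IsClosed A := by
      rw [← isSeqClosed_iff_isClosed]
      intro u x hu hux
      have hx0 : (0:ℝ) ≤ x :=
        le_of_tendsto_of_tendsto' tendsto_const_nhds hux (fun n => (hu n).1)
      refine ⟨hx0, ?_⟩
      have : Filter.Tendsto (fun n => |v (u n)|) Filter.atTop (nhds (|v x|)) :=
        ((hcont x hx0).tendsto.comp hux).abs
      exact le_of_tendsto_of_tendsto' tendsto_const_nhds this (fun n => (hu n).2)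
    exact hclosed.csInf_mem hAne hbdd
  have hT0 : 0 ≤ T := hTA.1
  have hTpos : 0 < T := by
    rcases lt_or_eq_of_le hT0 with h | h
    · exact h
    · exact absurd hTA.2 (by rw [← h]; exact not_le.2 h0)
  have hlt : ∀ t, 0 ≤ t → t < T → |v t| < c := by
    intro t ht htT
    by_contra hge
    exact absurd (csInf_le hbdd ⟨ht, not_lt.1 hge⟩) (not_le.2 htT)
  -- E = v^2 is antitone on [0, T]
  have hanti : AntitoneOn (fun t => v t ^ 2) (Set.Icc 0 T) := by
    have key : ∀ x ∈ Set.Ioo (0:ℝ) T,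
        HasDerivAt (fun t => v t ^ 2)
          ((2:ℕ) * v x ^ 1 * (-(β^2/(2*c)) * (v x / (c^2 - (v x)^2)) / m)) x := by
      intro x hx
      exact (hv x hx.1.le).pow 2
    apply antitoneOn_of_deriv_nonpos (convex_Icc 0 T)
    · exact (continuousOn_of_forall_continuousAt fun t ht =>
        (hcont t ht.1)).pow 2
    · intro x hx
      rw [interior_Icc] at hx
      exact ((key x hx).differentiableAt.differentiableWithinAt)
    · intro x hx
      rw [interior_Icc] at hx
      have hd : HasDerivAt v (-(β^2/(2*c)) * (v x / (c^2 - (v x)^2)) / m) x :=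
        hv x hx.1.le
      have hE : HasDerivAt (fun t => v t ^ 2)
          ((2:ℕ) * v x ^ 1 * (-(β^2/(2*c)) * (v x / (c^2 - (v x)^2)) / m)) x :=
        hd.pow 2
      rw [hE.deriv]
      have hden : 0 < c^2 - (v x)^2 := by
        have := hlt x hx.1.le hx.2
        nlinarith [sq_abs (v x), abs_nonneg (v x)]
      have heq : ((2:ℕ) : ℝ) * v x ^ 1 * (-(β^2/(2*c)) * (v x / (c^2 - (v x)^2)) / m)
          = -(β^2 * (v x)^2 / (c * (c^2 - (v x)^2) * m)) := by
        field_simp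
        ring
      rw [heq, neg_nonpos]
      positivity
  have hle : v T ^ 2 ≤ v 0 ^ 2 :=
    hanti (Set.left_mem_Icc.2 hT0) (Set.right_mem_Icc.2 hT0) hT0
  have : |v T| < c := by
    nlinarith [sq_abs (v T), sq_abs (v 0), abs_nonneg (v T), abs_nonneg (v 0)]
  exact absurd hTA.2 (not_le.2 this)
end

section
/- Let c > 0, β > 0, m > 0, and let v : [0,∞) → ℝ be a differentiable solution of m v'(t) = -(β²/(2c)) · v(t)/(c² - v(t)²) with |v(0)| < c. Then v(t) → 0 exponentially fast as t → ∞; precisely, there exists K > 0 such that |v(t)| ≤ |v(0)| · exp(-K t) for all t ≥ 0, with K = β²/(2 m c³). -/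
open Real Set Filter Topology

/-!
Multiplying the equation by `v` gives `v v' ≤ -K v²` as long as `|v| < c`, because
`1/(c² - v²) ≥ 1/c²`; hence `v²` stays below the barrier `v(0)² e^{-2Kt}`. The barrier itself
never lets `|v|` exceed `|v(0)| < c`, so the region where the estimate holds is never left.
Mathlib's comparison principle needs a strict inequality on the barrier, so the barrier is
raised to `v(0)² e^{-2Kt} + ε t` and `ε → 0` afterwards.
-/

theorem mul_scalarSelfForce_le {c β m u : ℝ} (hc : 0 < c) (hm : 0 < m) (hu : |u| < c) :
    u * (-(β^2/(2*c)) * (u / (c^2 - u^2)) / m) ≤ -(β^2/(2*m*c^3)) * u^2 := by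
  have hgap : 0 < c^2 - u^2 := by nlinarith [sq_abs u, abs_nonneg u]
  have key : u * (-(β^2/(2*c)) * (u / (c^2 - u^2)) / m) - -(β^2/(2*m*c^3)) * u^2
      = -(β^2 * u^4) / (2*m*c^3*(c^2 - u^2)) := by
    field_simp
    ring
  have : -(β^2 * u^4) / (2*m*c^3*(c^2 - u^2)) ≤ 0 :=
    div_nonpos_of_nonpos_of_nonneg (by nlinarith [sq_nonneg (β * u^2)]) (by positivity)
  linarith

section Dissipative

variable {F v : ℝ → ℝ} {K r : ℝ}

theorem sq_le_sq_mul_exp_add_of_dissipative (hK : 0 ≤ K)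
    (hv : ∀ t ∈ Ici (0:ℝ), HasDerivAt v (F (v t)) t)
    (hF : ∀ u, |u| < r → u * F u ≤ -K * u^2) (h0 : |v 0| < r)
    {ε t : ℝ} (hε : 0 < ε) (ht : 0 ≤ t) (hεt : v 0 ^ 2 + ε * t < r^2) :
    v t ^ 2 ≤ v 0 ^ 2 * exp (-(2*K) * t) + ε * t := by
  set B : ℝ → ℝ := fun s => v 0 ^ 2 * exp (-(2*K) * s) + ε * s
  have hB : ∀ s, HasDerivAt B (v 0 ^ 2 * (exp (-(2*K) * s) * -(2*K)) + ε) s := fun s =>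
    ((((hasDerivAt_id s).const_mul (-(2*K))).exp.const_mul (v 0 ^ 2)).add
      ((hasDerivAt_id s).const_mul ε)).congr_deriv (by simp)
  refine image_le_of_deriv_right_lt_deriv_boundary (f := fun s => v s ^ 2)
    (f' := fun s => 2 * (v s * F (v s)))
    (fun s hs => ((hv s hs.1).continuousAt.pow 2).continuousWithinAt)
    (fun s hs => (((hv s hs.1).pow 2).congr_deriv (by ring)).hasDerivWithinAt)
    (by simp [B]) hB ?_ ⟨ht, le_rfl⟩
  rintro x ⟨hx0, hxt⟩ hvx
  have hexp : exp (-(2*K) * x) ≤ 1 := exp_le_one_iff.mpr (by nlinarith)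
  have hvx_lt : v x ^ 2 < r ^ 2 := calc
    v x ^ 2 = v 0 ^ 2 * exp (-(2*K) * x) + ε * x := hvx
    _ ≤ v 0 ^ 2 + ε * t := by gcongr; exact mul_le_of_le_one_right (sq_nonneg _) hexp
    _ < r ^ 2 := hεt
  have hdiss := hF (v x) (abs_lt_of_sq_lt_sq hvx_lt ((abs_nonneg _).trans h0.le))
  have hpos : 0 ≤ v 0 ^ 2 * exp (-(2*K) * x) := by positivity
  show 2 * (v x * F (v x)) < v 0 ^ 2 * (exp (-(2*K) * x) * -(2*K)) + ε
  nlinarith [mul_nonneg hK hpos, mul_nonneg (mul_nonneg hK hε.le) hx0]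

theorem sq_le_sq_mul_exp_of_dissipative (hK : 0 ≤ K)
    (hv : ∀ t ∈ Ici (0:ℝ), HasDerivAt v (F (v t)) t)
    (hF : ∀ u, |u| < r → u * F u ≤ -K * u^2) (h0 : |v 0| < r) {t : ℝ} (ht : 0 ≤ t) :
    v t ^ 2 ≤ v 0 ^ 2 * exp (-(2*K) * t) := by
  have hlin : Continuous fun ε : ℝ => ε * t := by fun_prop
  have hlim : Tendsto (fun ε => v 0 ^ 2 * exp (-(2*K) * t) + ε * t) (𝓝[>] 0)
      (𝓝 (v 0 ^ 2 * exp (-(2*K) * t))) :=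
    ((continuous_const.add hlin).tendsto' 0 _ (by simp)).mono_left nhdsWithin_le_nhds
  have h0sq : v 0 ^ 2 < r ^ 2 :=
    sq_lt_sq' (by linarith [neg_abs_le (v 0)]) ((le_abs_self _).trans_lt h0)
  have hsmall : ∀ᶠ ε in 𝓝[>] (0:ℝ), v 0 ^ 2 + ε * t < r ^ 2 := nhdsWithin_le_nhds <|
    ((continuous_const.add hlin).tendsto' 0 (v 0 ^ 2) (by simp)).eventually_lt_const h0sq
  exact ge_of_tendsto hlim ((eventually_mem_nhdsWithin.and hsmall).mono fun ε ⟨hε, hεt⟩ =>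
    sq_le_sq_mul_exp_add_of_dissipative hK hv hF h0 hε ht hεt)

theorem abs_le_abs_mul_exp_of_dissipative (hK : 0 ≤ K)
    (hv : ∀ t ∈ Ici (0:ℝ), HasDerivAt v (F (v t)) t)
    (hF : ∀ u, |u| < r → u * F u ≤ -K * u^2) (h0 : |v 0| < r) {t : ℝ} (ht : 0 ≤ t) :
    |v t| ≤ |v 0| * exp (-K * t) := by
  refine abs_le_of_sq_le_sq ?_ (by positivity)
  calc v t ^ 2 ≤ v 0 ^ 2 * exp (-(2*K) * t) := sq_le_sq_mul_exp_of_dissipative hK hv hF h0 ht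
    _ = (|v 0| * exp (-K * t)) ^ 2 := by rw [mul_pow, sq_abs, ← exp_nat_mul]; ring_nf

end Dissipative

/-- exponential decay `|v t| ≤ |v 0| exp(-K t)` with `K = β²/(2 m c³)`. -/
theorem stmt_2 (c β m : ℝ) (hc : 0 < c) (hβ : 0 < β) (hm : 0 < m)
    (v : ℝ → ℝ)
    (hv : ∀ t ∈ Set.Ici (0:ℝ),
      HasDerivAt v (-(β^2/(2*c)) * (v t / (c^2 - (v t)^2)) / m) t)
    (h0 : |v 0| < c) :
    ∃ K : ℝ, 0 < K ∧ K = β^2/(2*m*c^3) ∧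
      ∀ t ∈ Set.Ici (0:ℝ), |v t| ≤ |v 0| * Real.exp (-K * t) :=
  ⟨_, by positivity, rfl, fun _ ht =>
    abs_le_abs_mul_exp_of_dissipative (F := fun u => -(β^2/(2*c)) * (u / (c^2 - u^2)) / m)
      (by positivity) hv (fun _ hu => mul_scalarSelfForce_le hc hm hu) h0 ht⟩
end

section
/- Let c > 0, β > 0, m > 0, and let v solve m v'(t) = -(β²/(2c)) · v(t)/(c² - v(t)²) on [0,∞) with 0 < v(0) < c. Then for all t ≥ 0, v(t) ≥ v(0) · exp(-(β²/(2 m c (c² - v(0)²))) t); in particular v(t) > 0 for all t. -/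
/-!
For `0 < y < v(0)` the drag `β² y / (2 m c (c² - y²))` is strictly smaller than the linear drag
`K y` with `K = β² / (2 m c (c² - v(0)²))`, so `v` cannot cross any of the barriers
`a · exp (-K t)` with `0 < a < v(0)`: at a first contact point `v` would be falling more slowly
than the barrier. Letting `a → v(0)` gives the bound.
-/

open Set Filter Topology Real

section Barrier

variable {F v : ℝ → ℝ} {K : ℝ}

theorem mul_exp_neg_le_of_hasDerivAt (hK : 0 ≤ K)
    (hv : ∀ t ∈ Ici (0 : ℝ), HasDerivAt v (F (v t)) t)
    (hF : ∀ y ∈ Ioo 0 (v 0), -K * y < F y) {a : ℝ} (ha : 0 < a) (hav : a < v 0) :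
    ∀ t ∈ Ici (0 : ℝ), a * exp (-K * t) ≤ v t := by
  intro T hT
  have hbarrier : ∀ x, HasDerivAt (fun t => a * exp (-K * t)) (-K * (a * exp (-K * x))) x :=
    fun x => (((hasDerivAt_id' x).const_mul (-K)).exp.const_mul a).congr_deriv (by ring)
  refine image_le_of_deriv_right_lt_deriv_boundary' (a := 0) (b := T)
    (fun x _ => (hbarrier x).continuousAt.continuousWithinAt)
    (fun x _ => (hbarrier x).hasDerivWithinAt) (by simpa using hav.le)
    (fun x hx => (hv x hx.1).continuousAt.continuousWithinAt)
    (fun x hx => (hv x hx.1).hasDerivWithinAt) ?_ ⟨hT, le_rfl⟩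
  intro x hx hcontact
  rw [← hcontact]
  have hexp : exp (-K * x) ≤ 1 := exp_le_one_iff.mpr (by nlinarith [hx.1])
  exact hF _ ⟨by positivity, by nlinarith [exp_pos (-K * x)]⟩

theorem apply_zero_mul_exp_neg_le_of_hasDerivAt (hK : 0 ≤ K)
    (hv : ∀ t ∈ Ici (0 : ℝ), HasDerivAt v (F (v t)) t)
    (hF : ∀ y ∈ Ioo 0 (v 0), -K * y < F y) (h0 : 0 < v 0) :
    ∀ t ∈ Ici (0 : ℝ), v 0 * exp (-K * t) ≤ v t := by
  intro t ht
  have hlim : Tendsto (fun a => a * exp (-K * t)) (𝓝[<] (v 0)) (𝓝 (v 0 * exp (-K * t))) :=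
    ((continuous_mul_const _).tendsto _).mono_left nhdsWithin_le_nhds
  refine le_of_tendsto hlim ?_
  filter_upwards [Ioo_mem_nhdsLT h0] with a ha
  exact mul_exp_neg_le_of_hasDerivAt hK hv hF ha.1 ha.2 t ht

end Barrier

theorem linear_bound_lt_drag_force {c β m x y : ℝ} (hβ : β ≠ 0) (hm : 0 < m)
    (hy : 0 < y) (hyx : y < x) (hxc : x < c) :
    -(β ^ 2 / (2 * m * c * (c ^ 2 - x ^ 2))) * y <
      -(β ^ 2 / (2 * c)) * (y / (c ^ 2 - y ^ 2)) / m := by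
  have hc : 0 < c := by linarith
  have hgap : 0 < c ^ 2 - x ^ 2 := by nlinarith
  have hgap_lt : c ^ 2 - x ^ 2 < c ^ 2 - y ^ 2 := by nlinarith
  have hlt : y / (c ^ 2 - y ^ 2) < y / (c ^ 2 - x ^ 2) := div_lt_div_of_pos_left hy hgap hgap_lt
  have hcoef : 0 < β ^ 2 / (2 * m * c) := by positivity
  calc -(β ^ 2 / (2 * m * c * (c ^ 2 - x ^ 2))) * y
      = -(β ^ 2 / (2 * m * c) * (y / (c ^ 2 - x ^ 2))) := by field_simp
    _ < -(β ^ 2 / (2 * m * c) * (y / (c ^ 2 - y ^ 2))) := by gcongr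
    _ = -(β ^ 2 / (2 * c)) * (y / (c ^ 2 - y ^ 2)) / m := by field_simp

theorem stmt_3_general (c β m : ℝ) (hβ : 0 < β) (hm : 0 < m)
    (v : ℝ → ℝ)
    (hv : ∀ t ∈ Set.Ici (0:ℝ),
      HasDerivAt v (-(β^2/(2*c)) * (v t / (c^2 - (v t)^2)) / m) t)
    (h0 : 0 < v 0) (h0' : v 0 < c) :
    ∀ t ∈ Set.Ici (0:ℝ),
      v 0 * Real.exp (-(β^2/(2*m*c*(c^2 - (v 0)^2))) * t) ≤ v t ∧ 0 < v t := by
  have hK : 0 ≤ β ^ 2 / (2 * m * c * (c ^ 2 - v 0 ^ 2)) := by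
    have : 0 < c ^ 2 - v 0 ^ 2 := by nlinarith
    have : 0 < c := h0.trans h0'
    positivity
  have hbound := apply_zero_mul_exp_neg_le_of_hasDerivAt
    (F := fun x => -(β ^ 2 / (2 * c)) * (x / (c ^ 2 - x ^ 2)) / m) hK hv
    (fun y hy => linear_bound_lt_drag_force hβ.ne' hm hy.1 hy.2 h0') h0
  intro t ht
  exact ⟨hbound t ht, (mul_pos h0 (exp_pos _)).trans_le (hbound t ht)⟩

/-- lower bound `v t ≥ v 0 · exp(-(β²/(2mc(c²-v(0)²))) t)`; in
particular `v t > 0` for all `t ≥ 0`. -/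
theorem stmt_3 (c β m : ℝ) (hc : 0 < c) (hβ : 0 < β) (hm : 0 < m)
    (v : ℝ → ℝ)
    (hv : ∀ t ∈ Set.Ici (0:ℝ),
      HasDerivAt v (-(β^2/(2*c)) * (v t / (c^2 - (v t)^2)) / m) t)
    (h0 : 0 < v 0) (h0' : v 0 < c) :
    ∀ t ∈ Set.Ici (0:ℝ),
      v 0 * Real.exp (-(β^2/(2*m*c*(c^2 - (v 0)^2))) * t) ≤ v t ∧ 0 < v t :=
  stmt_3_general c β m hβ hm v hv h0 h0'
end

section
/- Let c > 0, t > 0, and let y : [0,t] → ℝ be C¹ with y(0) = 0 and sup|y'| < c. Define τ : ℝ → ℝ by τ(x) = the unique s ∈ [0,t] with x = y(s) - c(t - s) for x ∈ [-ct, y(t)], the unique s ∈ [0,t] with x = y(s) + c(t - s) for x ∈ [y(t), ct], and τ(x) = 0 for x outside [-ct, ct]. Then τ is continuous on ℝ, differentiable on (-ct, y(t)) with τ'(x) = 1/(c + y'(τ(x))), and differentiable on (y(t), ct) with τ'(x) = -1/(c - y'(τ(x))). -/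
/-!
On each branch, `τ` inverts `φ s = y s ± c s`. Since `|y'| ≤ v̄ < c`, this map is expanding:
`(c - v̄) |a - b| ≤ |φ a - φ b|`, so its inverse `τ` is Lipschitz, hence continuous, and the
inverse function theorem for a continuous local left inverse gives `τ' = 1 / φ'(τ x)`.
At `x = ∓ct` the branch equation says `φ s = φ 0`, so injectivity of `φ` gives `τ x = 0` there,
and `τ` glues continuously with the zero function outside `[-ct, ct]`.
-/

open Set Filter Topology

section RetardedTime

variable {y y' τ : ℝ → ℝ} {S T : Set ℝ} {v ε d : ℝ}

lemma sub_mul_abs_sub_le_abs_add_mul_sub (hy : ∀ a ∈ S, ∀ b ∈ S, |y a - y b| ≤ v * |a - b|)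
    {a b : ℝ} (ha : a ∈ S) (hb : b ∈ S) :
    (|ε| - v) * |a - b| ≤ |(y a + ε * a) - (y b + ε * b)| := by
  have : |ε| * |a - b| ≤ |(y a + ε * a) - (y b + ε * b)| + v * |a - b| := calc
    |ε| * |a - b| = |((y a + ε * a) - (y b + ε * b)) - (y a - y b)| := by
        rw [← abs_mul]; ring_nf
    _ ≤ |(y a + ε * a) - (y b + ε * b)| + |y a - y b| := abs_sub _ _
    _ ≤ |(y a + ε * a) - (y b + ε * b)| + v * |a - b| := by gcongr; exact hy a ha b hb
  linarith

lemma injOn_add_mul (hy : ∀ a ∈ S, ∀ b ∈ S, |y a - y b| ≤ v * |a - b|) (hvε : v < |ε|) :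
    InjOn (fun s => y s + ε * s) S := by
  intro a ha b hb hab
  have := sub_mul_abs_sub_le_abs_add_mul_sub (ε := ε) hy ha hb
  rw [show y a + ε * a = y b + ε * b from hab, sub_self, abs_zero] at this
  have : |a - b| ≤ 0 := nonpos_of_mul_nonpos_right this (sub_pos.2 hvε)
  exact sub_eq_zero.1 (abs_nonpos_iff.1 this)

lemma lipschitzOnWith_of_add_mul_eq (hy : ∀ a ∈ S, ∀ b ∈ S, |y a - y b| ≤ v * |a - b|)
    (hvε : v < |ε|) (hinv : ∀ x ∈ T, τ x ∈ S ∧ y (τ x) + ε * τ x = x + d) :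
    LipschitzOnWith (Real.toNNReal (|ε| - v)⁻¹) τ T := by
  refine LipschitzOnWith.of_dist_le' fun x₁ hx₁ x₂ hx₂ => ?_
  obtain ⟨hs₁, he₁⟩ := hinv x₁ hx₁
  obtain ⟨hs₂, he₂⟩ := hinv x₂ hx₂
  have := sub_mul_abs_sub_le_abs_add_mul_sub (ε := ε) hy hs₁ hs₂
  rw [he₁, he₂, add_sub_add_right_eq_sub] at this
  rw [Real.dist_eq, Real.dist_eq, inv_mul_eq_div, le_div_iff₀ (sub_pos.2 hvε), mul_comm]
  exact this

lemma hasDerivAt_of_add_mul_eq {x : ℝ} (hy : HasDerivAt y (y' (τ x)) (τ x))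
    (hy'ε : |y' (τ x)| < |ε|) (hτ : ContinuousAt τ x)
    (hinv : ∀ᶠ u in 𝓝 x, y (τ u) + ε * τ u = u + d) :
    HasDerivAt τ (y' (τ x) + ε)⁻¹ x := by
  have hφ : HasDerivAt (fun s => y s + ε * s - d) (y' (τ x) + ε) (τ x) := by
    simpa using (hy.add ((hasDerivAt_id _).const_mul ε)).sub_const d
  have hne : y' (τ x) + ε ≠ 0 := by
    intro h
    rw [eq_neg_of_add_eq_zero_left h, abs_neg] at hy'ε
    exact lt_irrefl _ hy'ε
  exact hφ.of_local_left_inverse hτ hne (hinv.mono fun u hu => by simp [hu])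

end RetardedTime

lemma continuous_of_continuousOn_Icc_of_eq_zero {X : Type*} [TopologicalSpace X] [Zero X]
    {f : ℝ → X} {a b : ℝ} (hab : a ≤ b) (hf : ContinuousOn f (Icc a b)) (ha : f a = 0)
    (hb : f b = 0) (hout : ∀ x ∉ Icc a b, f x = 0) : Continuous f := by
  have hlow : EqOn f 0 (Iic a) := fun x hx =>
    hx.lt_or_eq.elim (fun h => hout x fun h' => h.not_ge h'.1) fun h => h ▸ ha
  have hhigh : EqOn f 0 (Ici b) := fun x hx =>
    hx.lt_or_eq.elim (fun h => hout x fun h' => h.not_ge h'.2) fun h => h ▸ hb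
  have hle : ContinuousOn f (Iic b) := by
    rw [← Iic_union_Icc_eq_Iic hab]
    exact (continuousOn_const.congr hlow).union_of_isClosed hf isClosed_Iic isClosed_Icc
  rw [← continuousOn_univ, ← Iic_union_Ici (a := b)]
  exact hle.union_of_isClosed (continuousOn_const.congr hhigh) isClosed_Iic isClosed_Ici

theorem stmt_8_general (c t : ℝ) (hc : 0 < c) (ht : 0 < t)
    (y : ℝ → ℝ) (h0 : y 0 = 0)
    (hy : ∀ τ ∈ Set.Icc (0:ℝ) t, HasDerivAt y (deriv y τ) τ)
    (vbar : ℝ) (hv : ∀ τ ∈ Set.Icc (0:ℝ) t, |deriv y τ| ≤ vbar) (hvc : vbar < c)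
    (τf : ℝ → ℝ)
    (hτ1 : ∀ x ∈ Set.Icc (-(c*t)) (y t),
      τf x ∈ Set.Icc (0:ℝ) t ∧ x = y (τf x) - c*(t - τf x))
    (hτ2 : ∀ x ∈ Set.Icc (y t) (c*t),
      τf x ∈ Set.Icc (0:ℝ) t ∧ x = y (τf x) + c*(t - τf x))
    (hτ3 : ∀ x, x ∉ Set.Icc (-(c*t)) (c*t) → τf x = 0) :
    Continuous τf ∧
    (∀ x ∈ Set.Ioo (-(c*t)) (y t),
      HasDerivAt τf (1/(c + deriv y (τf x))) x) ∧
    (∀ x ∈ Set.Ioo (y t) (c*t),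
      HasDerivAt τf (-(1/(c - deriv y (τf x)))) x) := by
  have hyLip : ∀ a ∈ Icc 0 t, ∀ b ∈ Icc 0 t, |y a - y b| ≤ vbar * |a - b| := fun a ha b hb =>
    (convex_Icc 0 t).norm_image_sub_le_of_norm_hasDerivWithin_le
      (fun s hs => (hy s hs).hasDerivWithinAt) hv hb ha
  have hv_abs_c : vbar < |c| := (abs_of_pos hc).symm ▸ hvc
  have hv_abs_neg_c : vbar < |-c| := (abs_neg c).symm ▸ hv_abs_c
  have h0t : (0 : ℝ) ∈ Icc 0 t := ⟨le_rfl, ht.le⟩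
  have hyt : |y t| < c * t := by
    have := hyLip t ⟨ht.le, le_rfl⟩ 0 h0t
    rw [h0, sub_zero, sub_zero, abs_of_pos ht] at this
    nlinarith
  obtain ⟨hyt₁, hyt₂⟩ := abs_lt.1 hyt
  have hleft : ∀ x ∈ Icc (-(c*t)) (y t), τf x ∈ Icc 0 t ∧ y (τf x) + c * τf x = x + c * t :=
    fun x hx => ⟨(hτ1 x hx).1, by linarith [(hτ1 x hx).2]⟩
  have hright : ∀ x ∈ Icc (y t) (c*t), τf x ∈ Icc 0 t ∧ y (τf x) + -c * τf x = x + -(c * t) :=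
    fun x hx => ⟨(hτ2 x hx).1, by linarith [(hτ2 x hx).2]⟩
  have hτ_neg_ct : τf (-(c*t)) = 0 := by
    obtain ⟨hs, he⟩ := hleft _ ⟨le_rfl, hyt₁.le⟩
    exact injOn_add_mul hyLip hv_abs_c hs h0t (by simp only [he, h0]; ring)
  have hτ_ct : τf (c*t) = 0 := by
    obtain ⟨hs, he⟩ := hright _ ⟨hyt₂.le, le_rfl⟩
    exact injOn_add_mul hyLip hv_abs_neg_c hs h0t (by simp only [he, h0]; ring)
  have hcont : Continuous τf := by
    refine continuous_of_continuousOn_Icc_of_eq_zero (by linarith) ?_ hτ_neg_ct hτ_ct hτ3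
    rw [← Icc_union_Icc_eq_Icc hyt₁.le hyt₂.le]
    exact (lipschitzOnWith_of_add_mul_eq hyLip hv_abs_c hleft).continuousOn.union_of_isClosed
      (lipschitzOnWith_of_add_mul_eq hyLip hv_abs_neg_c hright).continuousOn isClosed_Icc isClosed_Icc
  refine ⟨hcont, fun x hx => ?_, fun x hx => ?_⟩
  · have hs := (hleft x (Ioo_subset_Icc_self hx)).1
    have := hasDerivAt_of_add_mul_eq (hy _ hs) ((hv _ hs).trans_lt hv_abs_c) hcont.continuousAt
      (eventually_of_mem (Ioo_mem_nhds hx.1 hx.2) fun u hu => (hleft u (Ioo_subset_Icc_self hu)).2)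
    rwa [add_comm, ← one_div] at this
  · have hs := (hright x (Ioo_subset_Icc_self hx)).1
    have := hasDerivAt_of_add_mul_eq (hy _ hs) ((hv _ hs).trans_lt hv_abs_neg_c) hcont.continuousAt
      (eventually_of_mem (Ioo_mem_nhds hx.1 hx.2) fun u hu => (hright u (Ioo_subset_Icc_self hu)).2)
    rwa [← sub_eq_add_neg, ← neg_sub, inv_neg, ← one_div] at this

/-- the retarded-time function `τf` is continuous on `ℝ` and
differentiable off `{y t, ±ct}` with `τf' = 1/(c + y'(τf x))` on `(-ct, y t)`
and `τf' = -1/(c - y'(τf x))` on `(y t, ct)`. -/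
theorem stmt_8 (c t : ℝ) (hc : 0 < c) (ht : 0 < t)
    (y : ℝ → ℝ) (h0 : y 0 = 0)
    (hy : ∀ τ ∈ Set.Icc (0:ℝ) t, HasDerivAt y (deriv y τ) τ)
    (hy' : ContinuousOn (deriv y) (Set.Icc 0 t))
    (vbar : ℝ) (hv : ∀ τ ∈ Set.Icc (0:ℝ) t, |deriv y τ| ≤ vbar) (hvc : vbar < c)
    (τf : ℝ → ℝ)
    (hτ1 : ∀ x ∈ Set.Icc (-(c*t)) (y t),
      τf x ∈ Set.Icc (0:ℝ) t ∧ x = y (τf x) - c*(t - τf x))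
    (hτ2 : ∀ x ∈ Set.Icc (y t) (c*t),
      τf x ∈ Set.Icc (0:ℝ) t ∧ x = y (τf x) + c*(t - τf x))
    (hτ3 : ∀ x, x ∉ Set.Icc (-(c*t)) (c*t) → τf x = 0) :
    Continuous τf ∧
    (∀ x ∈ Set.Ioo (-(c*t)) (y t),
      HasDerivAt τf (1/(c + deriv y (τf x))) x) ∧
    (∀ x ∈ Set.Ioo (y t) (c*t),
      HasDerivAt τf (-(1/(c - deriv y (τf x)))) x) :=
  stmt_8_general c t hc ht y h0 hy vbar hv hvc τf hτ1 hτ2 hτ3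
end

section
/- Let c > 0, β ∈ ℝ, t > 0, and let y : [0,t] → ℝ be continuous with y(0) = 0 and |y(τ) - y(s)| < c|τ - s| for all τ ≠ s. Define φ(x,t) = (β/(2c)) ∫₀ᵗ 1{ y(τ) - c(t-τ) < x < y(τ) + c(t-τ) } dτ. Then φ(x,t) = (β/(2c)) τ(x), where τ(x) is the retarded-time function; in particular φ(y(t), t) = (β/(2c)) t, so the interaction energy U_fp(t) = -β φ(y(t), t) = -(β²/(2c)) t. -/
/-!
For fixed `x` the gap `g s = |x - y s| - c (t - s)` is strictly increasing on `[0, t]`, because the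
particle is slower than light, and `x` lies in the light cone emitted at time `s` exactly when
`g s < 0`. So the integrand is the indicator of `[0, τ(x))`, where the retarded time `τ(x)` is the
zero of `g`, or vanishes identically when `g 0 = |x| - c t > 0`. At `x = y t` the zero is `s = t`.
-/

open MeasureTheory Set

def coneGap (y : ℝ → ℝ) (c t x s : ℝ) : ℝ := |x - y s| - c * (t - s)

section coneGap

variable {y : ℝ → ℝ} {c t x : ℝ}

theorem mem_Ioo_iff_coneGap_neg {s : ℝ} :
    x ∈ Ioo (y s - c * (t - s)) (y s + c * (t - s)) ↔ coneGap y c t x s < 0 := by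
  rw [coneGap, sub_neg, abs_sub_lt_iff, mem_Ioo]
  constructor <;> rintro ⟨h₁, h₂⟩ <;> constructor <;> linarith

theorem coneGap_eq_zero {τ : ℝ} (hc : 0 ≤ c) (hτ : τ ≤ t)
    (hx : x = y τ - c * (t - τ) ∨ x = y τ + c * (t - τ)) : coneGap y c t x τ = 0 := by
  have hr : 0 ≤ c * (t - τ) := mul_nonneg hc (sub_nonneg.mpr hτ)
  rw [coneGap, sub_eq_zero]
  rcases hx with rfl | rfl
  · rw [sub_sub_cancel_left, abs_neg, abs_of_nonneg hr]
  · rw [add_sub_cancel_left, abs_of_nonneg hr]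

theorem coneGap_zero_pos (h0 : y 0 = 0) (hx : x ∉ Icc (-(c * t)) (c * t)) :
    0 < coneGap y c t x 0 := by
  rw [coneGap, h0, sub_zero, sub_zero, sub_pos, lt_abs]
  simp only [mem_Icc, not_and_or, not_le] at hx
  exact hx.symm.imp id (fun h => by linarith)

theorem strictMonoOn_coneGap {S : Set ℝ}
    (hLip : ∀ s ∈ S, ∀ τ ∈ S, s ≠ τ → |y τ - y s| < c * |τ - s|) (t x : ℝ) :
    StrictMonoOn (coneGap y c t x) S := by
  intro s hs τ hτ hsτ
  have hstep := hLip s hs τ hτ hsτ.ne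
  rw [abs_of_pos (sub_pos.mpr hsτ)] at hstep
  have htri : |x - y s| ≤ |x - y τ| + |y τ - y s| := abs_sub_le x (y τ) (y s)
  unfold coneGap
  linarith

end coneGap

theorem intervalIntegral_indicator_eq_of_mem_iff_lt {S : ℝ → Set ℝ} {a b τ₀ x : ℝ}
    (hτ₀ : τ₀ ∈ Icc a b) (hS : ∀ s ∈ Icc a b, x ∈ S s ↔ s < τ₀) :
    ∫ s in a..b, (S s).indicator (fun _ => (1 : ℝ)) x = τ₀ - a := by
  have hae : ∀ᵐ s ∂volume, s ∈ uIoc a b →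
      (S s).indicator (fun _ => (1 : ℝ)) x = {s | s ≤ τ₀}.indicator (fun _ => 1) s := by
    filter_upwards [Measure.ae_ne volume τ₀] with s hne hs
    rw [uIoc_of_le (hτ₀.1.trans hτ₀.2)] at hs
    have hlt : x ∈ S s ↔ s ∈ {s | s ≤ τ₀} := by
      rw [hS s (Ioc_subset_Icc_self hs), mem_ofPred_eq, le_iff_lt_or_eq, or_iff_left hne]
    by_cases h : x ∈ S s
    · rw [indicator_of_mem h, indicator_of_mem (hlt.mp h)]
    · rw [indicator_of_notMem h, indicator_of_notMem (mt hlt.mpr h)]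
  rw [intervalIntegral.integral_congr_ae hae, intervalIntegral.integral_indicator hτ₀,
    intervalIntegral.integral_const, smul_eq_mul, mul_one]

section lightCone

variable {y : ℝ → ℝ} {a b c t x : ℝ}

theorem intervalIntegral_lightCone_of_coneGap_eq_zero {τ : ℝ}
    (hmono : StrictMonoOn (coneGap y c t x) (Icc a b)) (hτ : τ ∈ Icc a b)
    (hgap : coneGap y c t x τ = 0) :
    ∫ s in a..b, (Ioo (y s - c * (t - s)) (y s + c * (t - s))).indicator (fun _ => (1 : ℝ)) x
      = τ - a := by
  refine intervalIntegral_indicator_eq_of_mem_iff_lt hτ fun s hs => ?_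
  rw [mem_Ioo_iff_coneGap_neg, ← hgap]
  exact hmono.lt_iff_lt hs hτ

theorem intervalIntegral_lightCone_of_coneGap_pos
    (hmono : StrictMonoOn (coneGap y c t x) (Icc a b)) (hab : a ≤ b)
    (hgap : 0 < coneGap y c t x a) :
    ∫ s in a..b, (Ioo (y s - c * (t - s)) (y s + c * (t - s))).indicator (fun _ => (1 : ℝ)) x
      = 0 := by
  have ha : a ∈ Icc a b := left_mem_Icc.mpr hab
  rw [← sub_self a]
  refine intervalIntegral_indicator_eq_of_mem_iff_lt ha fun s hs => ?_
  have hmono_a := hmono.monotoneOn ha hs hs.1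
  rw [mem_Ioo_iff_coneGap_neg]
  constructor <;> intro h <;> linarith [hs.1]

end lightCone

theorem stmt_9_general (c β t : ℝ) (hc : 0 < c) (ht : 0 < t)
    (y : ℝ → ℝ) (h0 : y 0 = 0)
    (hLip : ∀ s ∈ Set.Icc (0:ℝ) t, ∀ τ ∈ Set.Icc (0:ℝ) t, s ≠ τ →
      |y τ - y s| < c * |τ - s|)
    (τf : ℝ → ℝ)
    (hτ1 : ∀ x ∈ Set.Icc (-(c*t)) (y t),
      τf x ∈ Set.Icc (0:ℝ) t ∧ x = y (τf x) - c*(t - τf x))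
    (hτ2 : ∀ x ∈ Set.Icc (y t) (c*t),
      τf x ∈ Set.Icc (0:ℝ) t ∧ x = y (τf x) + c*(t - τf x))
    (hτ3 : ∀ x, x ∉ Set.Icc (-(c*t)) (c*t) → τf x = 0)
    (φ : ℝ → ℝ)
    (hφ : ∀ x, φ x = (β/(2*c)) * ∫ s in (0:ℝ)..t,
      Set.indicator (Set.Ioo (y s - c*(t-s)) (y s + c*(t-s))) (fun _ => (1:ℝ)) x) :
    (∀ x, φ x = (β/(2*c)) * τf x) ∧
    φ (y t) = (β/(2*c)) * t ∧
    -β * φ (y t) = -(β^2/(2*c)) * t := by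
  have hmono := strictMonoOn_coneGap hLip t
  have htt : t ∈ Icc 0 t := right_mem_Icc.mpr ht.le
  have hretarded : ∀ x ∈ Icc (-(c*t)) (c*t), τf x ∈ Icc 0 t ∧ coneGap y c t x (τf x) = 0 := by
    intro x hx
    rcases le_total x (y t) with hxy | hxy
    · obtain ⟨hτ, hx'⟩ := hτ1 x ⟨hx.1, hxy⟩
      exact ⟨hτ, coneGap_eq_zero hc.le hτ.2 (Or.inl hx')⟩
    · obtain ⟨hτ, hx'⟩ := hτ2 x ⟨hxy, hx.2⟩
      exact ⟨hτ, coneGap_eq_zero hc.le hτ.2 (Or.inr hx')⟩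
  have hfield : ∀ x, φ x = (β/(2*c)) * τf x := by
    intro x
    rw [hφ x]
    by_cases hx : x ∈ Icc (-(c*t)) (c*t)
    · obtain ⟨hτ, hgap⟩ := hretarded x hx
      rw [intervalIntegral_lightCone_of_coneGap_eq_zero (hmono x) hτ hgap, sub_zero]
    · rw [intervalIntegral_lightCone_of_coneGap_pos (hmono x) ht.le (coneGap_zero_pos h0 hx),
        hτ3 x hx]
  have hyt : |y t| < c * t := by
    simpa [h0, abs_of_pos ht] using hLip 0 (left_mem_Icc.mpr ht.le) t htt ht.ne
  have hτt : τf (y t) = t := by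
    obtain ⟨hτ, hgap⟩ := hretarded (y t) ⟨(neg_lt_of_abs_lt hyt).le, (lt_of_abs_lt hyt).le⟩
    exact (hmono (y t)).injOn hτ htt (hgap.trans (by simp [coneGap]))
  exact ⟨hfield, by rw [hfield, hτt], by rw [hfield, hτt]; ring⟩

/-- for a delta interaction, the field equals `(β/(2c)) τ(x)` where
`τ` is the retarded time; hence `φ(y t, t) = (β/(2c)) t` and
`U_fp = -β φ(y t, t) = -(β²/(2c)) t`. -/
theorem stmt_9 (c β t : ℝ) (hc : 0 < c) (ht : 0 < t)
    (y : ℝ → ℝ) (hy : Continuous y) (h0 : y 0 = 0)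
    (hLip : ∀ s ∈ Set.Icc (0:ℝ) t, ∀ τ ∈ Set.Icc (0:ℝ) t, s ≠ τ →
      |y τ - y s| < c * |τ - s|)
    (τf : ℝ → ℝ)
    (hτ1 : ∀ x ∈ Set.Icc (-(c*t)) (y t),
      τf x ∈ Set.Icc (0:ℝ) t ∧ x = y (τf x) - c*(t - τf x))
    (hτ2 : ∀ x ∈ Set.Icc (y t) (c*t),
      τf x ∈ Set.Icc (0:ℝ) t ∧ x = y (τf x) + c*(t - τf x))
    (hτ3 : ∀ x, x ∉ Set.Icc (-(c*t)) (c*t) → τf x = 0)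
    (φ : ℝ → ℝ)
    (hφ : ∀ x, φ x = (β/(2*c)) * ∫ s in (0:ℝ)..t,
      Set.indicator (Set.Ioo (y s - c*(t-s)) (y s + c*(t-s))) (fun _ => (1:ℝ)) x) :
    (∀ x, φ x = (β/(2*c)) * τf x) ∧
    φ (y t) = (β/(2*c)) * t ∧
    -β * φ (y t) = -(β^2/(2*c)) * t :=
  stmt_9_general c β t hc ht y h0 hLip τf hτ1 hτ2 hτ3 φ hφ
end

section
/- Let c > 0, β > 0, m > 0, v₀ with |v₀| < c, and let v solve m v' = -(β²/(2c)) v/(c² - v²) with v(0) = v₀, and y(t) = ∫₀ᵗ v. Then the field gradient profile g_t(x) from the delta-interaction solution satisfies: U_ff(t)/t → β²/(4c) as t → ∞. -/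
/-!
Along the equation of motion `v' = -κ v / (c² - v²)`, `κ = β² / (2cm)`, the quantity
`(v t · exp (κ t / c²))²` is nonincreasing as long as `|v| < c`; a first-exit argument then keeps
the particle subluminal for all time, and `|v t| ≤ |v 0| exp (-κ t / c²) → 0`.

At time `t` the light rays `s ↦ y s ∓ c (t - s)` emitted at the retarded times `s ∈ (0, t)`
sweep the regions `(-ct, y t)` and `(y t, ct)` strictly monotonically, with Jacobians `c ± v s`.
Changing variables, `∫ g_t² = (β/2c)² ∫₀ᵗ (1/(c + v) + 1/(c - v))`; the integrand tends to `2/c`,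
so by Cesàro averaging `U_ff(t)/t → (c²/2) (β/2c)² (2/c) = β²/(4c)`.
-/

open MeasureTheory Set Filter Topology Real

namespace SelfInteraction

variable {v : ℝ → ℝ} {c κ : ℝ}

theorem antitoneOn_sq_mul_exp (hc : 0 < c) (hκ : 0 ≤ κ) {s : Set ℝ} (hs : Convex ℝ s)
    (hv : ∀ t ∈ s, HasDerivAt v (-κ * (v t / (c ^ 2 - v t ^ 2))) t)
    (hlt : ∀ t ∈ interior s, |v t| < c) :
    AntitoneOn (fun t => (v t * exp (κ / c ^ 2 * t)) ^ 2) s := by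
  have hd : ∀ t ∈ s, HasDerivAt (fun t => (v t * exp (κ / c ^ 2 * t)) ^ 2)
      (2 * exp (κ / c ^ 2 * t) ^ 2 *
        (v t * (-κ * (v t / (c ^ 2 - v t ^ 2))) + κ / c ^ 2 * v t ^ 2)) t := fun t ht =>
    (((hv t ht).mul ((hasDerivAt_id t).const_mul _).exp).pow 2).congr_deriv
      (by simp only [Pi.mul_apply, id]; ring)
  refine antitoneOn_of_deriv_nonpos hs
    (fun t ht => (hd t ht).continuousAt.continuousWithinAt)
    (fun t ht => (hd t (interior_subset ht)).differentiableAt.differentiableWithinAt)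
    (fun t ht => ?_)
  have hgap : 0 < c ^ 2 - v t ^ 2 := by
    nlinarith [abs_nonneg (v t), sq_abs (v t), hlt t ht]
  have hrw : v t * (-κ * (v t / (c ^ 2 - v t ^ 2))) + κ / c ^ 2 * v t ^ 2 =
      -(κ * v t ^ 4 / (c ^ 2 * (c ^ 2 - v t ^ 2))) := by
    field_simp
    ring
  rw [(hd t (interior_subset ht)).deriv, hrw]
  exact mul_nonpos_of_nonneg_of_nonpos (by positivity) (neg_nonpos.2 (by positivity))

variable (hc : 0 < c) (hv : ∀ t ∈ Ici 0, HasDerivAt v (-κ * (v t / (c ^ 2 - v t ^ 2))) t)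
  (h0 : |v 0| < c)
include hc hv h0

theorem forall_abs_lt (hκ : 0 ≤ κ) : ∀ t ≥ 0, |v t| < c := by
  by_contra! ⟨t₀, ht₀, hct₀⟩
  set S := Ici 0 ∩ (fun t => |v t|) ⁻¹' Ici c
  have hS : IsClosed S := ContinuousOn.preimage_isClosed_of_isClosed
    (fun t ht => (hv t ht).continuousAt.abs.continuousWithinAt) isClosed_Ici isClosed_Ici
  obtain ⟨hT : 0 ≤ sInf S, hcT : c ≤ |v (sInf S)|⟩ : sInf S ∈ S :=
    hS.csInf_mem ⟨t₀, ht₀, hct₀⟩ ⟨0, fun _ h => h.1⟩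
  have hbefore : ∀ t ∈ interior (Icc 0 (sInf S)), |v t| < c := fun t ht => by
    rw [interior_Icc] at ht
    by_contra! h
    exact notMem_of_lt_csInf ht.2 ⟨0, fun _ h => h.1⟩ ⟨ht.1.le, h⟩
  have := antitoneOn_sq_mul_exp hc hκ (convex_Icc 0 (sInf S))
    (fun t ht => hv t ht.1) hbefore ⟨le_rfl, hT⟩ ⟨hT, le_rfl⟩ hT
  simp only [mul_zero, exp_zero, mul_one, sq_le_sq, abs_mul, abs_exp] at this
  nlinarith [one_le_exp (mul_nonneg (by positivity : 0 ≤ κ / c ^ 2) hT), abs_nonneg (v (sInf S))]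

theorem abs_le_mul_exp (hκ : 0 ≤ κ) {t : ℝ} (ht : 0 ≤ t) :
    |v t| ≤ |v 0| * exp (-(κ / c ^ 2 * t)) := by
  have hlt := forall_abs_lt hc hv h0 hκ
  have := antitoneOn_sq_mul_exp hc hκ (convex_Ici 0) hv
    (fun t ht => hlt t (interior_subset ht)) self_mem_Ici ht ht
  simp only [mul_zero, exp_zero, mul_one, sq_le_sq, abs_mul, abs_exp] at this
  rwa [exp_neg, ← div_eq_mul_inv, le_div_iff₀ (exp_pos _)]

theorem tendsto_zero (hκ : 0 < κ) : Tendsto v atTop (𝓝 0) := by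
  have hdecay : Tendsto (fun t => |v 0| * exp (-(κ / c ^ 2 * t))) atTop (𝓝 0) := by
    simpa using (tendsto_exp_neg_atTop_nhds_zero.comp
      (tendsto_id.const_mul_atTop (by positivity : 0 < κ / c ^ 2))).const_mul |v 0|
  refine squeeze_zero_norm' ?_ hdecay
  filter_upwards [eventually_ge_atTop 0] with t ht
  exact abs_le_mul_exp hc hv h0 hκ.le ht

end SelfInteraction

theorem tendsto_integral_div_of_tendsto {f : ℝ → ℝ} {L : ℝ}
    (hf : ∀ t ≥ 0, IntervalIntegrable f volume 0 t) (hlim : Tendsto f atTop (𝓝 L)) :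
    Tendsto (fun t => (∫ s in (0 : ℝ)..t, f s) / t) atTop (𝓝 L) := by
  set F := fun t => ∫ s in (0 : ℝ)..t, (f s - L)
  have hF : ∀ t ≥ 0, IntervalIntegrable (fun s => f s - L) volume 0 t := fun t ht =>
    (hf t ht).sub intervalIntegrable_const
  have hsmall : F =o[atTop] id := by
    refine Asymptotics.isLittleO_iff.2 fun ε hε => ?_
    obtain ⟨T, hT⟩ := Metric.tendsto_atTop.1 hlim (ε / 2) (half_pos hε)
    obtain ⟨T₀, hT₀, hT₀T⟩ : ∃ T₀ ≥ 0, T ≤ T₀ := ⟨max T 0, le_max_right _ _, le_max_left _ _⟩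
    filter_upwards [eventually_ge_atTop T₀, eventually_ge_atTop (2 * |F T₀| / ε)]
      with t htT hlarge
    have ht : 0 ≤ t := hT₀.trans htT
    have htail : ‖∫ s in T₀..t, (f s - L)‖ ≤ ε / 2 * |t - T₀| :=
      intervalIntegral.norm_integral_le_of_norm_le_const fun s hs => by
        rw [uIoc_of_le htT] at hs
        exact (hT s (hT₀T.trans hs.1.le)).le
    have hsplit : F t = F T₀ + ∫ s in T₀..t, (f s - L) :=
      (intervalIntegral.integral_add_adjacent_intervals (hF T₀ hT₀)
        ((hF T₀ hT₀).symm.trans (hF t ht))).symm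
    rw [div_le_iff₀ hε] at hlarge
    rw [Real.norm_eq_abs, abs_of_nonneg (sub_nonneg.2 htT)] at htail
    simp only [Real.norm_eq_abs, id, abs_of_nonneg ht, hsplit]
    calc |F T₀ + ∫ s in T₀..t, (f s - L)| ≤ |F T₀| + ε / 2 * (t - T₀) :=
          (abs_add_le _ _).trans (by gcongr)
      _ ≤ ε * t := by nlinarith
  refine (hsmall.tendsto_div_nhds_zero.add_const L).congr' ?_ |>.trans (by simp)
  filter_upwards [eventually_gt_atTop 0] with t ht
  simp only [F, id, intervalIntegral.integral_sub (hf t ht.le) intervalIntegrable_const,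
    intervalIntegral.integral_const, smul_eq_mul, sub_zero]
  field_simp
  ring

theorem integral_eq_setIntegral_Ioo_add {F : ℝ → ℝ} {a b d : ℝ} (hab : a ≤ b) (hbd : b ≤ d)
    (hF : ∀ x ∉ Icc a d, F x = 0) (h₁ : IntegrableOn F (Ioo a b)) (h₂ : IntegrableOn F (Ioo b d)) :
    ∫ x, F x = (∫ x in Ioo a b, F x) + ∫ x in Ioo b d, F x := by
  rw [← setIntegral_eq_integral_of_forall_compl_eq_zero hF, integral_Icc_eq_integral_Ioc,
    ← Ioc_union_Ioc_eq_Ioc hab hbd, setIntegral_union (Ioc_disjoint_Ioc_of_le le_rfl)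
      measurableSet_Ioc ((integrableOn_Ioc_iff_integrableOn_Ioo).2 h₁)
      ((integrableOn_Ioc_iff_integrableOn_Ioo).2 h₂),
    integral_Ioc_eq_integral_Ioo, integral_Ioc_eq_integral_Ioo]

theorem integrableOn_image_and_setIntegral_image_eq {s : Set ℝ} (hs : MeasurableSet s)
    {φ φ' F k h : ℝ → ℝ} (hφ : ∀ x ∈ s, HasDerivWithinAt φ (φ' x) s x) (hinj : InjOn φ s)
    (hF : ∀ x ∈ s, F (φ x) = k x) (hkh : ∀ x ∈ s, |φ' x| * k x = h x)
    (hh : IntegrableOn h s) :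
    IntegrableOn F (φ '' s) ∧ ∫ x in φ '' s, F x = ∫ x in s, h x := by
  have heq : EqOn (fun x => |φ' x| • F (φ x)) h s := fun x hx => by
    simp only [smul_eq_mul, hF x hx, hkh x hx]
  rw [integrableOn_image_iff_integrableOn_abs_deriv_smul hs hφ hinj,
    integral_image_eq_integral_abs_deriv_smul hs hφ hinj]
  exact ⟨hh.congr_fun heq.symm hs, setIntegral_congr_fun hs heq⟩

theorem ContinuousOn.continuousOn_primitive_Icc {v : ℝ → ℝ} (hv : ContinuousOn v (Ici 0))
    {t : ℝ} (ht : 0 ≤ t) : ContinuousOn (fun u => ∫ s in (0 : ℝ)..u, v s) (Icc 0 t) := by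
  have := intervalIntegral.continuousOn_primitive_interval (a := 0) (b := t) (μ := volume)
    (by rw [uIcc_of_le ht]; exact (hv.mono Icc_subset_Ici_self).integrableOn_Icc)
  rwa [uIcc_of_le ht] at this

theorem ContinuousOn.hasDerivAt_primitive {v : ℝ → ℝ} (hv : ContinuousOn v (Ici 0))
    {s : ℝ} (hs : 0 < s) : HasDerivAt (fun u => ∫ r in (0 : ℝ)..u, v r) (v s) s :=
  intervalIntegral.integral_hasDerivAt_right
    ((hv.mono Icc_subset_Ici_self).intervalIntegrable_of_Icc hs.le)
    ((hv.mono (Ioi_subset_Ici le_rfl)).stronglyMeasurableAtFilter isOpen_Ioi s hs)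
    (hv.continuousAt (Ici_mem_nhds hs))

namespace RetardedTime

def leftRay (y : ℝ → ℝ) (c t s : ℝ) : ℝ := y s - c * (t - s)

def rightRay (y : ℝ → ℝ) (c t s : ℝ) : ℝ := y s + c * (t - s)

variable {c t : ℝ} {y v τ F k h : ℝ → ℝ}

theorem hasDerivAt_leftRay {s : ℝ} (hy : HasDerivAt y (v s) s) :
    HasDerivAt (leftRay y c t) (v s + c) s :=
  (hy.sub (((hasDerivAt_id s).const_sub t).const_mul c)).congr_deriv (by ring)

theorem hasDerivAt_rightRay {s : ℝ} (hy : HasDerivAt y (v s) s) :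
    HasDerivAt (rightRay y c t) (v s - c) s :=
  (hy.add (((hasDerivAt_id s).const_sub t).const_mul c)).congr_deriv (by ring)

theorem continuousOn_leftRay {s : Set ℝ} (hy : ContinuousOn y s) :
    ContinuousOn (leftRay y c t) s :=
  hy.sub (by fun_prop)

theorem continuousOn_rightRay {s : Set ℝ} (hy : ContinuousOn y s) :
    ContinuousOn (rightRay y c t) s :=
  hy.add (by fun_prop)

variable (hyc : ContinuousOn y (Icc 0 t)) (hy : ∀ s ∈ Ioo 0 t, HasDerivAt y (v s) s)
include hyc hy

theorem strictMonoOn_leftRay (hv : ∀ s ∈ Ioo 0 t, 0 < c + v s) :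
    StrictMonoOn (leftRay y c t) (Icc 0 t) :=
  strictMonoOn_of_deriv_pos (convex_Icc 0 t) (continuousOn_leftRay hyc) fun s hs => by
    rw [interior_Icc] at hs
    linarith [(hasDerivAt_leftRay (c := c) (t := t) (hy s hs)).deriv, hv s hs]

theorem strictAntiOn_rightRay (hv : ∀ s ∈ Ioo 0 t, 0 < c - v s) :
    StrictAntiOn (rightRay y c t) (Icc 0 t) :=
  strictAntiOn_of_deriv_neg (convex_Icc 0 t) (continuousOn_rightRay hyc) fun s hs => by
    rw [interior_Icc] at hs
    linarith [(hasDerivAt_rightRay (c := c) (t := t) (hy s hs)).deriv, hv s hs]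

variable (ht : 0 ≤ t) (hy0 : y 0 = 0)
include ht hy0

theorem integrableOn_and_setIntegral_left (hv : ∀ s ∈ Ioo 0 t, 0 < c + v s)
    (hτ : ∀ x ∈ Icc (-(c * t)) (y t), τ x ∈ Icc 0 t ∧ x = leftRay y c t (τ x))
    (hF : ∀ x ∈ Ioo (-(c * t)) (y t), F x = k (τ x))
    (hkh : ∀ s ∈ Ioo 0 t, (c + v s) * k s = h s) (hh : IntegrableOn h (Ioo 0 t)) :
    IntegrableOn F (Ioo (-(c * t)) (y t)) ∧
      ∫ x in Ioo (-(c * t)) (y t), F x = ∫ s in Ioo 0 t, h s := by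
  have hmono := strictMonoOn_leftRay hyc hy hv
  have himage : leftRay y c t '' Ioo 0 t = Ioo (-(c * t)) (y t) := by
    rw [(continuousOn_leftRay hyc).image_Ioo_of_strictMonoOn ht hmono]
    simp [leftRay, hy0]
  have hFk : ∀ s ∈ Ioo 0 t, F (leftRay y c t s) = k s := fun s hs => by
    have hxs := himage ▸ mem_image_of_mem (leftRay y c t) hs
    obtain ⟨hmem, heq⟩ := hτ _ (Ioo_subset_Icc_self hxs)
    rw [hF _ hxs, hmono.injOn hmem (Ioo_subset_Icc_self hs) heq.symm]
  rw [← himage]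
  refine integrableOn_image_and_setIntegral_image_eq measurableSet_Ioo
    (fun s hs => (hasDerivAt_leftRay (hy s hs)).hasDerivWithinAt)
    (hmono.injOn.mono Ioo_subset_Icc_self) hFk (fun s hs => ?_) hh
  rw [← hkh s hs, abs_of_pos (by linarith [hv s hs]), add_comm]

theorem integrableOn_and_setIntegral_right (hv : ∀ s ∈ Ioo 0 t, 0 < c - v s)
    (hτ : ∀ x ∈ Icc (y t) (c * t), τ x ∈ Icc 0 t ∧ x = rightRay y c t (τ x))
    (hF : ∀ x ∈ Ioo (y t) (c * t), F x = k (τ x))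
    (hkh : ∀ s ∈ Ioo 0 t, (c - v s) * k s = h s) (hh : IntegrableOn h (Ioo 0 t)) :
    IntegrableOn F (Ioo (y t) (c * t)) ∧
      ∫ x in Ioo (y t) (c * t), F x = ∫ s in Ioo 0 t, h s := by
  have hanti := strictAntiOn_rightRay hyc hy hv
  have himage : rightRay y c t '' Ioo 0 t = Ioo (y t) (c * t) := by
    rw [(continuousOn_rightRay hyc).image_Ioo_of_strictAntiOn ht hanti]
    simp [rightRay, hy0]
  have hFk : ∀ s ∈ Ioo 0 t, F (rightRay y c t s) = k s := fun s hs => by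
    have hxs := himage ▸ mem_image_of_mem (rightRay y c t) hs
    obtain ⟨hmem, heq⟩ := hτ _ (Ioo_subset_Icc_self hxs)
    rw [hF _ hxs, hanti.injOn hmem (Ioo_subset_Icc_self hs) heq.symm]
  rw [← himage]
  refine integrableOn_image_and_setIntegral_image_eq measurableSet_Ioo
    (fun s hs => (hasDerivAt_rightRay (hy s hs)).hasDerivWithinAt)
    (hanti.injOn.mono Ioo_subset_Icc_self) hFk (fun s hs => ?_) hh
  rw [← hkh s hs, abs_of_neg (by linarith [hv s hs]), neg_sub]

theorem integral_sq_eq {b : ℝ} {G : ℝ → ℝ}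
    (hvc : ContinuousOn v (Icc 0 t)) (hv : ∀ s ∈ Icc 0 t, |v s| < c)
    (hτ₁ : ∀ x ∈ Icc (-(c * t)) (y t), τ x ∈ Icc 0 t ∧ x = leftRay y c t (τ x))
    (hτ₂ : ∀ x ∈ Icc (y t) (c * t), τ x ∈ Icc 0 t ∧ x = rightRay y c t (τ x))
    (hG₁ : ∀ x ∈ Ioo (-(c * t)) (y t), G x = b * (1 / (c + v (τ x))))
    (hG₂ : ∀ x ∈ Ioo (y t) (c * t), G x = -(b * (1 / (c - v (τ x)))))
    (hG₃ : ∀ x ∉ Icc (-(c * t)) (c * t), G x = 0) :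
    ∫ x, G x ^ 2 = b ^ 2 * ∫ s in (0 : ℝ)..t, (1 / (c + v s) + 1 / (c - v s)) := by
  have hplus : ∀ s ∈ Icc 0 t, 0 < c + v s := fun s hs => by
    linarith [neg_abs_le (v s), hv s hs]
  have hminus : ∀ s ∈ Icc 0 t, 0 < c - v s := fun s hs => by
    linarith [le_abs_self (v s), hv s hs]
  have hplus' := fun s (hs : s ∈ Ioo 0 t) => hplus s (Ioo_subset_Icc_self hs)
  have hminus' := fun s (hs : s ∈ Ioo 0 t) => hminus s (Ioo_subset_Icc_self hs)
  have hint₁ : IntegrableOn (fun s => b ^ 2 * (1 / (c + v s))) (Ioo 0 t) :=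
    (continuousOn_const.mul (continuousOn_const.div (continuousOn_const.add hvc)
      fun s hs => (hplus s hs).ne')).integrableOn_Icc.mono_set Ioo_subset_Icc_self
  have hint₂ : IntegrableOn (fun s => b ^ 2 * (1 / (c - v s))) (Ioo 0 t) :=
    (continuousOn_const.mul (continuousOn_const.div (continuousOn_const.sub hvc)
      fun s hs => (hminus s hs).ne')).integrableOn_Icc.mono_set Ioo_subset_Icc_self
  obtain ⟨hI₁, hleft⟩ := integrableOn_and_setIntegral_left (F := fun x => G x ^ 2)
    (k := fun s => (b * (1 / (c + v s))) ^ 2) hyc hy ht hy0 hplus' hτ₁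
    (fun x hx => by rw [hG₁ x hx]) (fun s hs => by field_simp [(hplus' s hs).ne']) hint₁
  obtain ⟨hI₂, hright⟩ := integrableOn_and_setIntegral_right (F := fun x => G x ^ 2)
    (k := fun s => (b * (1 / (c - v s))) ^ 2) hyc hy ht hy0 hminus' hτ₂
    (fun x hx => by rw [hG₂ x hx, neg_sq]) (fun s hs => by field_simp [(hminus' s hs).ne']) hint₂
  have hlo : -(c * t) ≤ y t := by
    simpa [leftRay, hy0] using (strictMonoOn_leftRay hyc hy hplus').monotoneOn
      (left_mem_Icc.2 ht) (right_mem_Icc.2 ht) ht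
  have hhi : y t ≤ c * t := by
    simpa [rightRay, hy0] using (strictAntiOn_rightRay hyc hy hminus').antitoneOn
      (left_mem_Icc.2 ht) (right_mem_Icc.2 ht) ht
  rw [integral_eq_setIntegral_Ioo_add hlo hhi (fun x hx => by simp [hG₃ x hx]) hI₁ hI₂,
    hleft, hright, ← integral_add hint₁ hint₂, intervalIntegral.integral_of_le ht,
    integral_Ioc_eq_integral_Ioo, ← integral_const_mul]
  simp only [mul_add]

end RetardedTime

theorem tendsto_integral_inv_add_inv_div {v : ℝ → ℝ} {c : ℝ} (hc : 0 < c)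
    (hvc : ContinuousOn v (Ici 0)) (hlt : ∀ t ≥ 0, |v t| < c) (hv : Tendsto v atTop (𝓝 0)) :
    Tendsto (fun t => (∫ s in (0 : ℝ)..t, (1 / (c + v s) + 1 / (c - v s))) / t) atTop
      (𝓝 (2 / c)) := by
  have hqc : ContinuousOn (fun s => 1 / (c + v s) + 1 / (c - v s)) (Ici 0) :=
    (continuousOn_const.div (continuousOn_const.add hvc) fun s hs =>
        (show 0 < c + v s by linarith [neg_abs_le (v s), hlt s hs]).ne').add
      (continuousOn_const.div (continuousOn_const.sub hvc) fun s hs =>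
        (show 0 < c - v s by linarith [le_abs_self (v s), hlt s hs]).ne')
  have hlim : Tendsto (fun s => 1 / (c + v s) + 1 / (c - v s)) atTop (𝓝 (1 / c + 1 / c)) := by
    simpa using ((tendsto_const_nhds.add hv).inv₀ (by simpa using hc.ne')).add
      ((tendsto_const_nhds.sub hv).inv₀ (by simpa using hc.ne'))
  rw [show 2 / c = 1 / c + 1 / c by ring]
  exact tendsto_integral_div_of_tendsto
    (fun t ht => (hqc.mono Icc_subset_Ici_self).intervalIntegrable_of_Icc ht) hlim

theorem stmt_11_general (c β m : ℝ) (hc : 0 < c) (hβ : 0 < β) (hm : 0 < m)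
    (v : ℝ → ℝ)
    (hv : ∀ t ∈ Set.Ici (0:ℝ),
      HasDerivAt v (-(β^2/(2*c)) * (v t / (c^2 - (v t)^2)) / m) t)
    (h0 : |v 0| < c)
    (y : ℝ → ℝ) (hy : ∀ t, y t = ∫ s in (0:ℝ)..t, v s)
    (τf : ℝ → ℝ → ℝ)
    (hτ1 : ∀ t > (0:ℝ), ∀ x ∈ Set.Icc (-(c*t)) (y t),
      τf t x ∈ Set.Icc (0:ℝ) t ∧ x = y (τf t x) - c*(t - τf t x))
    (hτ2 : ∀ t > (0:ℝ), ∀ x ∈ Set.Icc (y t) (c*t),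
      τf t x ∈ Set.Icc (0:ℝ) t ∧ x = y (τf t x) + c*(t - τf t x))
    (g : ℝ → ℝ → ℝ)
    (hg1 : ∀ t > (0:ℝ), ∀ x ∈ Set.Ioo (-(c*t)) (y t),
      g t x = (β/(2*c)) * (1/(c + v (τf t x))))
    (hg2 : ∀ t > (0:ℝ), ∀ x ∈ Set.Ioo (y t) (c*t),
      g t x = -((β/(2*c)) * (1/(c - v (τf t x)))))
    (hg3 : ∀ t > (0:ℝ), ∀ x, x ∉ Set.Icc (-(c*t)) (c*t) → g t x = 0) :
    Filter.Tendsto (fun t => ((c^2/2) * ∫ x : ℝ, (g t x)^2) / t)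
      Filter.atTop (nhds (β^2/(4*c))) := by
  have hκ : 0 < β ^ 2 / (2 * c) / m := by positivity
  have hode : ∀ t ∈ Ici (0 : ℝ),
      HasDerivAt v (-(β ^ 2 / (2 * c) / m) * (v t / (c ^ 2 - v t ^ 2))) t :=
    fun t ht => (hv t ht).congr_deriv (by ring)
  have hvc : ContinuousOn v (Ici 0) := fun t ht => (hv t ht).continuousAt.continuousWithinAt
  have hlt := SelfInteraction.forall_abs_lt hc hode h0 hκ.le
  have hy' : y = fun t => ∫ s in (0 : ℝ)..t, v s := funext hy
  have hU : ∀ t > 0, ((c ^ 2 / 2) * ∫ x, g t x ^ 2) / t = c ^ 2 / 2 * (β / (2 * c)) ^ 2 *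
      ((∫ s in (0 : ℝ)..t, (1 / (c + v s) + 1 / (c - v s))) / t) := fun t ht => by
    rw [RetardedTime.integral_sq_eq (hy' ▸ hvc.continuousOn_primitive_Icc ht.le)
      (fun s hs => hy' ▸ hvc.hasDerivAt_primitive hs.1) ht.le (by simp [hy])
      (hvc.mono Icc_subset_Ici_self) (fun s hs => hlt s hs.1)
      (hτ1 t ht) (hτ2 t ht) (hg1 t ht) (hg2 t ht) (hg3 t ht)]
    ring
  have hlim := (tendsto_integral_inv_add_inv_div hc hvc hlt
    (SelfInteraction.tendsto_zero hc hode h0 hκ)).const_mul (c ^ 2 / 2 * (β / (2 * c)) ^ 2)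
  convert hlim.congr' (eventually_gt_atTop 0 |>.mono fun t ht => (hU t ht).symm) using 2
  field_simp
  ring

/-- for the self-consistent delta-interaction solution,
`U_ff(t)/t → β²/(4c)` as `t → ∞`. -/
theorem stmt_11 (c β m : ℝ) (hc : 0 < c) (hβ : 0 < β) (hm : 0 < m)
    (v : ℝ → ℝ)
    (hv : ∀ t ∈ Set.Ici (0:ℝ),
      HasDerivAt v (-(β^2/(2*c)) * (v t / (c^2 - (v t)^2)) / m) t)
    (h0 : |v 0| < c)
    (y : ℝ → ℝ) (hy : ∀ t, y t = ∫ s in (0:ℝ)..t, v s)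
    (τf : ℝ → ℝ → ℝ)
    (hτ1 : ∀ t > (0:ℝ), ∀ x ∈ Set.Icc (-(c*t)) (y t),
      τf t x ∈ Set.Icc (0:ℝ) t ∧ x = y (τf t x) - c*(t - τf t x))
    (hτ2 : ∀ t > (0:ℝ), ∀ x ∈ Set.Icc (y t) (c*t),
      τf t x ∈ Set.Icc (0:ℝ) t ∧ x = y (τf t x) + c*(t - τf t x))
    (hτ3 : ∀ t > (0:ℝ), ∀ x, x ∉ Set.Icc (-(c*t)) (c*t) → τf t x = 0)
    (g : ℝ → ℝ → ℝ)
    (hg1 : ∀ t > (0:ℝ), ∀ x ∈ Set.Ioo (-(c*t)) (y t),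
      g t x = (β/(2*c)) * (1/(c + v (τf t x))))
    (hg2 : ∀ t > (0:ℝ), ∀ x ∈ Set.Ioo (y t) (c*t),
      g t x = -((β/(2*c)) * (1/(c - v (τf t x)))))
    (hg3 : ∀ t > (0:ℝ), ∀ x, x ∉ Set.Icc (-(c*t)) (c*t) → g t x = 0) :
    Filter.Tendsto (fun t => ((c^2/2) * ∫ x : ℝ, (g t x)^2) / t)
      Filter.atTop (nhds (β^2/(4*c))) :=
  stmt_11_general c β m hc hβ hm v hv h0 y hy τf hτ1 hτ2 g hg1 hg2 hg3
end

section
/- Let c > 0, β > 0, m > 0, and let v solve m v' = -(β²/(2c)) v/(c² - v²) with |v(0)| < c, y(t) = ∫₀ᵗ v. Define the total energy H(t) = T_p(t) + T_f(t) + U_ff(t) + U_fp(t), where T_p = (m/2)v², U_fp(t) = -(β²/(2c))t, and T_f(t) = U_ff(t) = (c²/2)∫ g_t(x)² dx with g_t as in the delta-interaction solution. Then H is constant in t. -/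
/-!
A signal emitted by the particle at time `s` sits at time `t` on the light ray
`x = y(s) ∓ c (t - s)`, so the field `g_t` is a function of the emission time. Changing variables
`x ↦ s` along the two rays (Jacobians `c ± v(s)`) gives
`∫ g_t² = ∫₀ᵗ (β/2c)² (1/(c + v) + 1/(c - v)) ds`, so `T_f + U_ff` grows at the rate
`β²c / (2(c² - v²))`, which is exactly what `T_p` and `U_fp` lose by the equation of motion.
The equation of motion also keeps `|v| < c` for all time, since `v²` cannot increase.
-/

open MeasureTheory Set

theorem lt_of_hasDerivAt_nonpos_of_lt {u u' : ℝ → ℝ} {b : ℝ}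
    (hu : ∀ t ≥ 0, HasDerivAt u (u' t) t) (hu' : ∀ t ≥ 0, u t < b → u' t ≤ 0) (h0 : u 0 < b)
    {t : ℝ} (ht : 0 ≤ t) : u t < b := by
  by_contra! hbt
  have hcont : ContinuousOn u (Icc 0 t) := fun s hs =>
    (hu s hs.1).continuousAt.continuousWithinAt
  have hclosed : IsClosed (Icc 0 t ∩ u ⁻¹' Ici b) :=
    hcont.preimage_isClosed_of_isClosed isClosed_Icc isClosed_Ici
  obtain ⟨T, ⟨⟨hT0, hTt⟩, hbT⟩, hTmin⟩ :=
    (isCompact_Icc.of_isClosed_subset hclosed inter_subset_left).exists_isLeast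
      ⟨t, ⟨ht, le_rfl⟩, hbt⟩
  have hbelow : ∀ s ∈ Ioo 0 T, u s < b := fun s hs => by
    by_contra! h
    exact hs.2.not_ge (hTmin ⟨⟨hs.1.le, hs.2.le.trans hTt⟩, h⟩)
  have hanti : AntitoneOn u (Icc 0 T) := by
    refine antitoneOn_of_hasDerivWithinAt_nonpos (f' := u') (convex_Icc 0 T)
      (hcont.mono (Icc_subset_Icc_right hTt)) (fun s hs => ?_) fun s hs => ?_
    all_goals rw [interior_Icc] at hs
    · exact (hu s hs.1.le).hasDerivWithinAt
    · exact hu' s hs.1.le (hbelow s hs)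
  have hT : u T ≤ u 0 := hanti (left_mem_Icc.2 hT0) (right_mem_Icc.2 hT0) hT0
  exact (hT.trans_lt h0).not_ge hbT

theorem abs_lt_of_hasDerivAt_damped {c k m : ℝ} {v : ℝ → ℝ} (hk : 0 ≤ k) (hm : 0 < m)
    (hv : ∀ t ∈ Ici (0:ℝ), HasDerivAt v (-k * (v t / (c ^ 2 - v t ^ 2)) / m) t)
    (h0 : |v 0| < c) {t : ℝ} (ht : 0 ≤ t) : |v t| < c := by
  have hc : 0 < c := (abs_nonneg _).trans_lt h0
  refine abs_lt_of_sq_lt_sq (lt_of_hasDerivAt_nonpos_of_lt (fun s hs => (hv s hs).pow 2)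
    (fun s _ hs => ?_) (sq_lt_sq' (abs_lt.1 h0).1 (abs_lt.1 h0).2) ht) hc.le
  have hgap : 0 < c ^ 2 - v s ^ 2 := sub_pos.2 hs
  have hloss : 0 ≤ k * v s ^ 2 / ((c ^ 2 - v s ^ 2) * m) := by positivity
  calc ((2 : ℕ) : ℝ) * v s ^ (2 - 1) * (-k * (v s / (c ^ 2 - v s ^ 2)) / m)
      = -(2 * (k * v s ^ 2 / ((c ^ 2 - v s ^ 2) * m))) := by field_simp; ring
    _ ≤ 0 := by linarith

theorem integral_eq_setIntegral_Ioo_add_setIntegral_Ioo {E : Type*} [NormedAddCommGroup E]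
    [NormedSpace ℝ E] {f : ℝ → E} {a m b : ℝ} (ham : a ≤ m) (hmb : m ≤ b)
    (hf : ∀ x ∉ Icc a b, f x = 0) (h₁ : IntegrableOn f (Ioo a m))
    (h₂ : IntegrableOn f (Ioo m b)) :
    ∫ x, f x = (∫ x in Ioo a m, f x) + ∫ x in Ioo m b, f x := by
  rw [← setIntegral_eq_integral_of_forall_compl_eq_zero hf, integral_Icc_eq_integral_Ioc,
    ← Ioc_union_Ioc_eq_Ioc ham hmb,
    setIntegral_union (Ioc_disjoint_Ioc_of_le le_rfl) measurableSet_Ioc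
      ((integrableOn_Ioc_iff_integrableOn_Ioo).2 h₁)
      ((integrableOn_Ioc_iff_integrableOn_Ioo).2 h₂),
    integral_Ioc_eq_integral_Ioo, integral_Ioc_eq_integral_Ioo]

theorem integrableOn_image_and_setIntegral_image_eq_of_retarded {φ φ' τ f G F : ℝ → ℝ}
    {t : ℝ} (ht : 0 ≤ t) (hφ : ∀ s, HasDerivAt φ (φ' s) s) (hinj : Function.Injective φ)
    (hτ : ∀ x ∈ φ '' Ioo 0 t, φ (τ x) = x) (hf : ∀ x ∈ φ '' Ioo 0 t, f x = G (τ x))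
    (hF : ContinuousOn F (Icc 0 t)) (hGF : ∀ s ∈ Ioo 0 t, |φ' s| * G s = F s) :
    IntegrableOn f (φ '' Ioo 0 t) ∧ ∫ x in φ '' Ioo 0 t, f x = ∫ s in 0..t, F s := by
  have hφ' : ∀ s ∈ Ioo 0 t, HasDerivWithinAt φ (φ' s) (Ioo 0 t) s :=
    fun s _ => (hφ s).hasDerivWithinAt
  have hfF : EqOn (fun s => |φ' s| • f (φ s)) F (Ioo 0 t) := fun s hs => by
    have hτs : τ (φ s) = s := hinj (hτ _ (mem_image_of_mem φ hs))
    simp only [smul_eq_mul, hf _ (mem_image_of_mem φ hs), hτs, hGF s hs]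
  refine ⟨?_, ?_⟩
  · rw [integrableOn_image_iff_integrableOn_abs_deriv_smul measurableSet_Ioo hφ' hinj.injOn]
    exact ((hF.integrableOn_Icc).mono_set Ioo_subset_Icc_self).congr_fun hfF.symm measurableSet_Ioo
  · rw [integral_image_eq_integral_abs_deriv_smul measurableSet_Ioo hφ' hinj.injOn,
      setIntegral_congr_fun measurableSet_Ioo hfF, intervalIntegral.integral_of_le ht,
      integral_Ioc_eq_integral_Ioo]

theorem integral_sq_field_eq {c a t : ℝ} {w Y τ g : ℝ → ℝ} (hwc : Continuous w)
    (hw : ∀ s, |w s| < c) (hY : ∀ s, HasDerivAt Y (w s) s) (hY0 : Y 0 = 0) (ht : 0 ≤ t)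
    (h₁ : ∀ x ∈ Ioo (-(c * t)) (Y t),
      x = Y (τ x) - c * (t - τ x) ∧ g x = a * (1 / (c + w (τ x))))
    (h₂ : ∀ x ∈ Ioo (Y t) (c * t),
      x = Y (τ x) + c * (t - τ x) ∧ g x = -(a * (1 / (c - w (τ x)))))
    (h₃ : ∀ x ∉ Icc (-(c * t)) (c * t), g x = 0) :
    ∫ x, g x ^ 2 = ∫ s in 0..t, a ^ 2 * (1 / (c + w s) + 1 / (c - w s)) := by
  have hpos : ∀ s, 0 < c + w s ∧ 0 < c - w s := fun s => by
    constructor <;> linarith [abs_lt.1 (hw s)]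
  have hF₁ : Continuous fun s => a ^ 2 * (1 / (c + w s)) :=
    continuous_const.mul (continuous_const.div (by fun_prop) fun s => (hpos s).1.ne')
  have hF₂ : Continuous fun s => a ^ 2 * (1 / (c - w s)) :=
    continuous_const.mul (continuous_const.div (by fun_prop) fun s => (hpos s).2.ne')
  -- at time `t`, the signals emitted at time `s` to the left and right are at `φ₁ s`, `φ₂ s`
  set φ₁ : ℝ → ℝ := fun s => Y s - c * (t - s)
  set φ₂ : ℝ → ℝ := fun s => Y s + c * (t - s)
  have hφ₁ : ∀ s, HasDerivAt φ₁ (w s + c) s := fun s =>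
    ((hY s).sub (((hasDerivAt_id' s).const_sub t).const_mul c)).congr_deriv (by ring)
  have hφ₂ : ∀ s, HasDerivAt φ₂ (w s - c) s := fun s =>
    ((hY s).add (((hasDerivAt_id' s).const_sub t).const_mul c)).congr_deriv (by ring)
  have hmono₁ : StrictMono φ₁ :=
    strictMono_of_hasDerivAt_pos hφ₁ fun s => by linarith [hpos s]
  have hanti₂ : StrictAnti φ₂ :=
    strictAnti_of_hasDerivAt_neg hφ₂ fun s => by linarith [hpos s]
  have him₁ : φ₁ '' Ioo 0 t = Ioo (-(c * t)) (Y t) := by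
    rw [(continuous_iff_continuousAt.2 fun s => (hφ₁ s).continuousAt).image_Ioo_of_strictMono
      hmono₁]
    simp [φ₁, hY0]
  have him₂ : φ₂ '' Ioo 0 t = Ioo (Y t) (c * t) := by
    rw [(continuous_iff_continuousAt.2 fun s => (hφ₂ s).continuousAt).continuousOn
      |>.image_Ioo_of_strictAntiOn ht (hanti₂.strictAntiOn _)]
    simp [φ₂, hY0]
  obtain ⟨hint₁, heq₁⟩ := integrableOn_image_and_setIntegral_image_eq_of_retarded
    (f := fun x => g x ^ 2) (G := fun s => (a * (1 / (c + w s))) ^ 2) ht hφ₁ hmono₁.injective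
    (fun x hx => by rw [him₁] at hx; simp only [φ₁]; exact (h₁ x hx).1.symm)
    (fun x hx => by rw [him₁] at hx; simp only [(h₁ x hx).2])
    hF₁.continuousOn fun s _ => by
      rw [abs_of_pos (by linarith [hpos s])]; field_simp [(hpos s).1.ne']; ring
  obtain ⟨hint₂, heq₂⟩ := integrableOn_image_and_setIntegral_image_eq_of_retarded
    (f := fun x => g x ^ 2) (G := fun s => (a * (1 / (c - w s))) ^ 2) ht hφ₂ hanti₂.injective
    (fun x hx => by rw [him₂] at hx; simp only [φ₂]; exact (h₂ x hx).1.symm)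
    (fun x hx => by rw [him₂] at hx; simp only [(h₂ x hx).2, neg_sq])
    hF₂.continuousOn fun s _ => by
      rw [abs_of_neg (by linarith [hpos s]), neg_sub]; field_simp [(hpos s).2.ne']
  rw [him₁] at hint₁ heq₁
  rw [him₂] at hint₂ heq₂
  have hYt₁ : -(c * t) ≤ Y t := by simpa [φ₁, hY0] using hmono₁.monotone ht
  have hYt₂ : Y t ≤ c * t := by simpa [φ₂, hY0] using hanti₂.antitone ht
  rw [integral_eq_setIntegral_Ioo_add_setIntegral_Ioo hYt₁ hYt₂
    (fun x hx => by simp [h₃ x hx]) hint₁ hint₂, heq₁, heq₂, ← intervalIntegral.integral_add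
    (hF₁.intervalIntegrable 0 t) (hF₂.intervalIntegrable 0 t)]
  simp only [mul_add]

/-- `H`, with the field energy `T_f + U_ff` written as an integral over emission times. -/
noncomputable def totalEnergy (c β m : ℝ) (v w : ℝ → ℝ) (r : ℝ) : ℝ :=
  m / 2 * v r ^ 2
    + 2 * (c ^ 2 / 2 * ∫ s in 0..r, (β / (2 * c)) ^ 2 * (1 / (c + w s) + 1 / (c - w s)))
    + -(β ^ 2 / (2 * c)) * r

theorem hasDerivAt_totalEnergy {c β m r : ℝ} {v w : ℝ → ℝ} (hm : m ≠ 0) (hwc : Continuous w)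
    (hw : ∀ s, |w s| < c) (hvw : w r = v r)
    (hv : HasDerivAt v (-(β ^ 2 / (2 * c)) * (v r / (c ^ 2 - v r ^ 2)) / m) r) :
    HasDerivAt (totalEnergy c β m v w) 0 r := by
  have hpos : ∀ s, 0 < c + w s ∧ 0 < c - w s := fun s => by
    constructor <;> linarith [abs_lt.1 (hw s)]
  have hF : Continuous fun s => (β / (2 * c)) ^ 2 * (1 / (c + w s) + 1 / (c - w s)) :=
    continuous_const.mul ((continuous_const.div (by fun_prop) fun s => (hpos s).1.ne').add
      (continuous_const.div (by fun_prop) fun s => (hpos s).2.ne'))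
  have hderiv := (((hv.pow 2).const_mul (m / 2)).add
    (((hF.integral_hasStrictDerivAt 0 r).hasDerivAt.const_mul (c ^ 2 / 2)).const_mul 2)).add
    ((hasDerivAt_id r).const_mul (-(β ^ 2 / (2 * c))))
  refine hderiv.congr_deriv ?_
  -- the field gains `β²c/(2(c² - v²))` per unit time: the kinetic energy lost,
  -- `β²v²/(2c(c² - v²))`, plus the interaction energy lost, `β²/(2c)`
  have hc : c ≠ 0 := ((abs_nonneg _).trans_lt (hw r)).ne'
  have hplus := (hpos r).1.ne'
  have hminus := (hpos r).2.ne'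
  rw [hvw] at hplus hminus ⊢
  have hsq : c ^ 2 - v r ^ 2 ≠ 0 := by
    rw [sq_sub_sq]; exact mul_ne_zero hplus hminus
  field_simp
  ring

theorem totalEnergy_eq {c β m t₁ t₂ : ℝ} {v w : ℝ → ℝ} (hm : m ≠ 0) (hwc : Continuous w)
    (hw : ∀ s, |w s| < c) (hwv : ∀ s, 0 ≤ s → w s = v s)
    (hv : ∀ t ∈ Ici (0:ℝ), HasDerivAt v (-(β ^ 2 / (2 * c)) * (v t / (c ^ 2 - v t ^ 2)) / m) t)
    (ht₁ : 0 < t₁) (ht₂ : 0 < t₂) :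
    totalEnergy c β m v w t₁ = totalEnergy c β m v w t₂ := by
  have hE : ∀ r : ℝ, 0 < r → HasDerivAt (totalEnergy c β m v w) 0 r := fun r hr =>
    hasDerivAt_totalEnergy hm hwc hw (hwv r hr.le) (hv r hr.le)
  exact isOpen_Ioi.is_const_of_deriv_eq_zero isPreconnected_Ioi
    (fun r hr => (hE r hr).differentiableAt.differentiableWithinAt) (fun r hr => (hE r hr).deriv)
    ht₁ ht₂

theorem stmt_13_general (c β m : ℝ) (hc : 0 < c) (hm : 0 < m)
    (v : ℝ → ℝ)
    (hv : ∀ t ∈ Set.Ici (0:ℝ),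
      HasDerivAt v (-(β^2/(2*c)) * (v t / (c^2 - (v t)^2)) / m) t)
    (h0 : |v 0| < c)
    (y : ℝ → ℝ) (hy : ∀ t, y t = ∫ s in (0:ℝ)..t, v s)
    (τf : ℝ → ℝ → ℝ)
    (hτ1 : ∀ t > (0:ℝ), ∀ x ∈ Set.Icc (-(c*t)) (y t),
      τf t x ∈ Set.Icc (0:ℝ) t ∧ x = y (τf t x) - c*(t - τf t x))
    (hτ2 : ∀ t > (0:ℝ), ∀ x ∈ Set.Icc (y t) (c*t),
      τf t x ∈ Set.Icc (0:ℝ) t ∧ x = y (τf t x) + c*(t - τf t x))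
    (g : ℝ → ℝ → ℝ)
    (hg1 : ∀ t > (0:ℝ), ∀ x ∈ Set.Ioo (-(c*t)) (y t),
      g t x = (β/(2*c)) * (1/(c + v (τf t x))))
    (hg2 : ∀ t > (0:ℝ), ∀ x ∈ Set.Ioo (y t) (c*t),
      g t x = -((β/(2*c)) * (1/(c - v (τf t x)))))
    (hg3 : ∀ t > (0:ℝ), ∀ x, x ∉ Set.Icc (-(c*t)) (c*t) → g t x = 0)
    (H : ℝ → ℝ)
    (hH : ∀ t, H t = (m/2) * (v t)^2 + 2 * ((c^2/2) * ∫ x : ℝ, (g t x)^2)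
      + (-(β^2/(2*c)) * t)) :
    ∀ t₁ > (0:ℝ), ∀ t₂ > (0:ℝ), H t₁ = H t₂ := by
  intro t₁ ht₁ t₂ ht₂
  -- `v` is only known on `[0, ∞)`; extend it constantly to the left
  set w : ℝ → ℝ := fun s => v (max s 0)
  have hwv : ∀ s, 0 ≤ s → w s = v s := fun s hs => by simp only [w, max_eq_left hs]
  have hwc : Continuous w := continuous_iff_continuousAt.2 fun s =>
    (hv _ (le_max_right s 0)).continuousAt.comp (f := fun b => max b 0)
      (continuous_id.max continuous_const).continuousAt
  have hw : ∀ s, |w s| < c := fun s =>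
    abs_lt_of_hasDerivAt_damped (by positivity) hm hv h0 (le_max_right s 0)
  set Y : ℝ → ℝ := fun r => ∫ u in 0..r, w u
  have hyY : ∀ r, 0 ≤ r → y r = Y r := fun r hr => by
    rw [hy]
    refine intervalIntegral.integral_congr fun u hu => (hwv u ?_).symm
    rw [uIcc_of_le hr] at hu
    exact hu.1
  have hfield : ∀ t > 0, ∫ x, g t x ^ 2
      = ∫ s in 0..t, (β / (2 * c)) ^ 2 * (1 / (c + w s) + 1 / (c - w s)) := fun t ht => by
    refine integral_sq_field_eq (Y := Y) (τ := τf t) hwc hw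
      (fun s => (hwc.integral_hasStrictDerivAt 0 s).hasDerivAt) intervalIntegral.integral_same
      ht.le (fun x hx => ?_) (fun x hx => ?_) (hg3 t ht)
    · rw [← hyY t ht.le] at hx
      obtain ⟨hτ, hx'⟩ := hτ1 t ht x (Ioo_subset_Icc_self hx)
      rw [hwv _ hτ.1, ← hyY _ hτ.1]
      exact ⟨hx', hg1 t ht x hx⟩
    · rw [← hyY t ht.le] at hx
      obtain ⟨hτ, hx'⟩ := hτ2 t ht x (Ioo_subset_Icc_self hx)
      rw [hwv _ hτ.1, ← hyY _ hτ.1]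
      exact ⟨hx', hg2 t ht x hx⟩
  rw [hH, hH, hfield t₁ ht₁, hfield t₂ ht₂]
  exact totalEnergy_eq hm.ne' hwc hw hwv hv ht₁ ht₂

/-- conservation of the total energy
`H = T_p + T_f + U_ff + U_fp` for the self-consistent delta solution, where
`T_p = (m/2)v²`, `T_f = U_ff = (c²/2)∫ g²`, `U_fp = -(β²/(2c)) t`. -/
theorem stmt_13 (c β m : ℝ) (hc : 0 < c) (hβ : 0 < β) (hm : 0 < m)
    (v : ℝ → ℝ)
    (hv : ∀ t ∈ Set.Ici (0:ℝ),
      HasDerivAt v (-(β^2/(2*c)) * (v t / (c^2 - (v t)^2)) / m) t)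
    (h0 : |v 0| < c)
    (y : ℝ → ℝ) (hy : ∀ t, y t = ∫ s in (0:ℝ)..t, v s)
    (τf : ℝ → ℝ → ℝ)
    (hτ1 : ∀ t > (0:ℝ), ∀ x ∈ Set.Icc (-(c*t)) (y t),
      τf t x ∈ Set.Icc (0:ℝ) t ∧ x = y (τf t x) - c*(t - τf t x))
    (hτ2 : ∀ t > (0:ℝ), ∀ x ∈ Set.Icc (y t) (c*t),
      τf t x ∈ Set.Icc (0:ℝ) t ∧ x = y (τf t x) + c*(t - τf t x))
    (hτ3 : ∀ t > (0:ℝ), ∀ x, x ∉ Set.Icc (-(c*t)) (c*t) → τf t x = 0)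
    (g : ℝ → ℝ → ℝ)
    (hg1 : ∀ t > (0:ℝ), ∀ x ∈ Set.Ioo (-(c*t)) (y t),
      g t x = (β/(2*c)) * (1/(c + v (τf t x))))
    (hg2 : ∀ t > (0:ℝ), ∀ x ∈ Set.Ioo (y t) (c*t),
      g t x = -((β/(2*c)) * (1/(c - v (τf t x)))))
    (hg3 : ∀ t > (0:ℝ), ∀ x, x ∉ Set.Icc (-(c*t)) (c*t) → g t x = 0)
    (H : ℝ → ℝ)
    (hH : ∀ t, H t = (m/2) * (v t)^2 + 2 * ((c^2/2) * ∫ x : ℝ, (g t x)^2)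
      + (-(β^2/(2*c)) * t)) :
    ∀ t₁ > (0:ℝ), ∀ t₂ > (0:ℝ), H t₁ = H t₂ :=
  stmt_13_general c β m hc hm v hv h0 y hy τf hτ1 hτ2 g hg1 hg2 hg3 H hH
end

section
/- Let h : [a,b] → ℝ be C², attaining its maximum at the endpoint a, with h'(a) = 0 and h''(a) < 0, and h(τ) < h(a) for τ ∈ (a,b]. Then as n → ∞, ∫ₐᵇ e^{n h(τ)} dτ ~ e^{n h(a)} · √(π / (-2 n h''(a))). -/
/-!
Since `h'(a) = 0`, comparing second derivatives puts `h τ - h a` above `K / 2 * (τ - a) ^ 2`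
near `a` for every `K < h''(a)`, and below it for every `K > h''(a)`. After the substitution
`u = √n (τ - a)`, the integral of `exp (n K / 2 (τ - a) ^ 2)` over `[a, a + δ]`, multiplied by
`√n`, tends to the half-line Gaussian integral `√(π / (-2 K))`, while on `[a + δ, b]` the
integrand is exponentially small because `h` stays below `h a - m` for some `m > 0`. Letting
`K → h''(a)` gives `√n ∫ₐᵇ e^{n (h - h a)} → √(π / (-2 h''(a)))`, which is the claim.
-/

open Real Filter

open MeasureTheory intervalIntegral Set Topology

theorem tendsto_sqrt_mul_integral_exp_quadratic {K : ℝ} (hK : K < 0) (a : ℝ) {δ : ℝ}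
    (hδ : 0 < δ) :
    Tendsto (fun n : ℝ => √n * ∫ τ in a..a + δ, exp (n * (K / 2 * (τ - a) ^ 2))) atTop
      (𝓝 √(π / (-2 * K))) := by
  have hb : 0 < -K / 2 := by linarith
  have hgauss : Tendsto (fun T => ∫ u in (0 : ℝ)..T, exp (-(-K / 2) * u ^ 2)) atTop
      (𝓝 (√(π / (-K / 2)) / 2)) := by
    simpa only [integral_gaussian_Ioi, id] using
      intervalIntegral_tendsto_integral_Ioi 0 (integrable_exp_neg_mul_sq hb).integrableOn
        tendsto_id
  have hlim : √(π / (-K / 2)) / 2 = √(π / (-2 * K)) := by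
    rw [show π / (-K / 2) = 2 ^ 2 * (π / (-2 * K)) by field_simp,
      sqrt_mul (by positivity), sqrt_sq zero_le_two]
    ring
  rw [← hlim]
  refine (hgauss.comp (tendsto_sqrt_atTop.atTop_mul_const hδ)).congr' ?_
  filter_upwards [eventually_gt_atTop 0] with n hn
  have hsn : 0 < √n := sqrt_pos.2 hn
  have hsub := integral_comp_mul_sub (fun u => exp (-(-K / 2) * u ^ 2)) hsn.ne' (√n * a)
    (a := a) (b := a + δ)
  have hrw : ∀ τ, exp (-(-K / 2) * (√n * τ - √n * a) ^ 2) =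
      exp (n * (K / 2 * (τ - a) ^ 2)) := fun τ => by
    rw [← mul_sub, mul_pow, sq_sqrt hn.le]
    ring_nf
  simp only [hrw, sub_self, mul_add, add_sub_cancel_left, smul_eq_mul] at hsub
  rw [Function.comp_apply, hsub, ← mul_assoc, mul_inv_cancel₀ hsn.ne', one_mul]

theorem tendsto_sqrt_mul_integral_exp_of_neg {f : ℝ → ℝ} {c d : ℝ}
    (hf : ContinuousOn f (Icc c d)) (hcd : c ≤ d) (hneg : ∀ x ∈ Icc c d, f x < 0) :
    Tendsto (fun n : ℝ => √n * ∫ x in c..d, exp (n * f x)) atTop (𝓝 0) := by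
  obtain ⟨ξ, hξ, hmax⟩ := isCompact_Icc.exists_isMaxOn (nonempty_Icc.2 hcd) hf
  have hm : 0 < -f ξ := neg_pos.2 (hneg ξ hξ)
  have hdecay : Tendsto (fun n : ℝ => (d - c) * (n ^ (1 / 2 : ℝ) * exp (-(-f ξ) * n))) atTop
      (𝓝 0) := by
    simpa using (tendsto_rpow_mul_exp_neg_mul_atTop_nhds_zero (1 / 2) _ hm).const_mul (d - c)
  refine squeeze_zero' ?_ ?_ hdecay
  · filter_upwards [eventually_ge_atTop 0] with n hn
    exact mul_nonneg (sqrt_nonneg n) (integral_nonneg hcd fun x _ => (exp_pos _).le)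
  · filter_upwards [eventually_ge_atTop 0] with n hn
    have hle : ∫ x in c..d, exp (n * f x) ≤ ∫ _ in c..d, exp (n * f ξ) := by
      refine integral_mono_on hcd ?_ intervalIntegrable_const fun x hx => ?_
      · exact ContinuousOn.intervalIntegrable_of_Icc hcd (by fun_prop)
      · exact exp_le_exp.2 (mul_le_mul_of_nonneg_left (hmax hx) hn)
    rw [intervalIntegral.integral_const, smul_eq_mul] at hle
    calc √n * ∫ x in c..d, exp (n * f x) ≤ √n * ((d - c) * exp (n * f ξ)) := by gcongr
      _ = (d - c) * (n ^ (1 / 2 : ℝ) * exp (-(-f ξ) * n)) := by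
        rw [sqrt_eq_rpow]; ring_nf

theorem eventually_nhdsGE_le_of_deriv_deriv_le {f g : ℝ → ℝ} {a : ℝ}
    (hf : Differentiable ℝ f) (hf' : Differentiable ℝ (deriv f))
    (hg : Differentiable ℝ g) (hg' : Differentiable ℝ (deriv g))
    (h₀ : f a = g a) (h₁ : deriv f a = deriv g a)
    (h₂ : ∀ᶠ x in 𝓝[≥] a, deriv (deriv f) x ≤ deriv (deriv g) x) :
    ∀ᶠ x in 𝓝[≥] a, f x ≤ g x := by
  obtain ⟨u, hau, hu⟩ := mem_nhdsGE_iff_exists_Icc_subset.1 h₂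
  have hderiv : AntitoneOn (deriv f - deriv g) (Icc a u) := by
    refine antitoneOn_of_deriv_nonpos (convex_Icc a u) (hf'.sub hg').continuous.continuousOn
      (hf'.sub hg').differentiableOn fun x hx => ?_
    rw [deriv_sub (hf' x) (hg' x), sub_nonpos]
    exact hu (interior_subset hx)
  have hdiff : AntitoneOn (f - g) (Icc a u) := by
    refine antitoneOn_of_deriv_nonpos (convex_Icc a u) (hf.sub hg).continuous.continuousOn
      (hf.sub hg).differentiableOn fun x hx => ?_
    have hx' := interior_subset hx
    have := hderiv (left_mem_Icc.2 hau.le) hx' hx'.1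
    rw [deriv_sub (hf x) (hg x)]
    simpa [h₁] using this
  filter_upwards [Icc_mem_nhdsGE hau] with x hx
  simpa [h₀] using hdiff (left_mem_Icc.2 hau.le) hx hx.1

theorem eventually_nhdsGE_sub_le_of_deriv_deriv_lt {f : ℝ → ℝ} {a K : ℝ} (hf : ContDiff ℝ 2 f)
    (h₁ : deriv f a = 0) (hK : deriv (deriv f) a < K) :
    ∀ᶠ x in 𝓝[≥] a, f x - f a ≤ K / 2 * (x - a) ^ 2 := by
  set q : ℝ → ℝ := fun x => f a + K / 2 * (x - a) ^ 2
  have hq : ∀ x, HasDerivAt q (K * (x - a)) x := fun x => by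
    refine (((((hasDerivAt_id' x).sub_const a).fun_pow 2).const_mul (K / 2)).const_add
      (f a)).congr_deriv ?_
    ring
  have hq' : deriv q = fun x => K * (x - a) := funext fun x => (hq x).deriv
  have hq'' : ∀ x, HasDerivAt (deriv q) K x := fun x => by
    simpa [hq'] using ((hasDerivAt_id x).sub_const a).const_mul K
  have hf' : ContDiff ℝ 1 (deriv f) := hf.deriv'
  have hnear : ∀ᶠ x in 𝓝[≥] a, deriv (deriv f) x ≤ K :=
    nhdsWithin_le_nhds <| (hf'.continuous_deriv le_rfl).continuousAt.eventually
      (gt_mem_nhds hK) |>.mono fun _ => le_of_lt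
  have := eventually_nhdsGE_le_of_deriv_deriv_le (a := a) (hf.differentiable (by norm_num))
    (hf'.differentiable one_ne_zero) (fun x => (hq x).differentiableAt)
    (fun x => (hq'' x).differentiableAt) (by simp [q]) (by simp [hq', h₁])
    (by simpa [(hq'' _).deriv] using hnear)
  filter_upwards [this] with x hx
  simp only [q] at hx
  linarith

theorem eventually_nhdsGE_le_sub_of_lt_deriv_deriv {f : ℝ → ℝ} {a K : ℝ} (hf : ContDiff ℝ 2 f)
    (h₁ : deriv f a = 0) (hK : K < deriv (deriv f) a) :
    ∀ᶠ x in 𝓝[≥] a, K / 2 * (x - a) ^ 2 ≤ f x - f a := by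
  have := eventually_nhdsGE_sub_le_of_deriv_deriv_lt (a := a) (K := -K) hf.neg (by simp [h₁])
    (by simpa using hK)
  filter_upwards [this] with x hx
  linarith

theorem tendsto_nhds_of_frequently_bounds {ι : Type*} {l : Filter ι} {u : ι → ℝ} {G : ℝ → ℝ}
    {K₀ : ℝ} (hG : ContinuousAt G K₀)
    (hlower : ∃ᶠ K in 𝓝 K₀, ∃ v : ι → ℝ, Tendsto v l (𝓝 (G K)) ∧ ∀ᶠ i in l, v i ≤ u i)
    (hupper : ∃ᶠ K in 𝓝 K₀, ∃ v : ι → ℝ, Tendsto v l (𝓝 (G K)) ∧ ∀ᶠ i in l, u i ≤ v i) :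
    Tendsto u l (𝓝 (G K₀)) := by
  refine tendsto_order.2 ⟨fun x hx => ?_, fun x hx => ?_⟩
  · obtain ⟨K, ⟨v, hv, hvu⟩, hxK⟩ :=
      (hlower.and_eventually (hG.eventually (lt_mem_nhds hx))).exists
    filter_upwards [hv.eventually (lt_mem_nhds hxK), hvu] with i h₁ h₂
    exact h₁.trans_le h₂
  · obtain ⟨K, ⟨v, hv, huv⟩, hxK⟩ :=
      (hupper.and_eventually (hG.eventually (gt_mem_nhds hx))).exists
    filter_upwards [hv.eventually (gt_mem_nhds hxK), huv] with i h₁ h₂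
    exact h₂.trans_lt h₁

theorem integral_exp_mul_le_integral_exp_mul {φ ψ : ℝ → ℝ} {c d n : ℝ} (hφ : Continuous φ)
    (hψ : Continuous ψ) (hcd : c ≤ d) (hn : 0 ≤ n) (hle : ∀ x ∈ Icc c d, φ x ≤ ψ x) :
    ∫ x in c..d, exp (n * φ x) ≤ ∫ x in c..d, exp (n * ψ x) :=
  integral_mono_on hcd ((by fun_prop : Continuous _).intervalIntegrable _ _)
    ((by fun_prop : Continuous _).intervalIntegrable _ _) fun x hx =>
    exp_le_exp.2 (mul_le_mul_of_nonneg_left (hle x hx) hn)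

theorem tendsto_sqrt_mul_integral_exp_laplace {f : ℝ → ℝ} {a b K₀ : ℝ} (hab : a < b)
    (hf : Continuous f) (hneg : ∀ x ∈ Ioc a b, f x < 0) (hK₀ : K₀ < 0)
    (hlower : ∀ K < K₀, ∀ᶠ x in 𝓝[≥] a, K / 2 * (x - a) ^ 2 ≤ f x)
    (hupper : ∀ K > K₀, ∀ᶠ x in 𝓝[≥] a, f x ≤ K / 2 * (x - a) ^ 2) :
    Tendsto (fun n : ℝ => √n * ∫ x in a..b, exp (n * f x)) atTop (𝓝 √(π / (-2 * K₀))) := by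
  have hsplit : ∀ {δ}, 0 < δ → a + δ ≤ b → ∀ n : ℝ, ∫ x in a..b, exp (n * f x) =
      (∫ x in a..a + δ, exp (n * f x)) + ∫ x in a + δ..b, exp (n * f x) := fun _ _ n =>
    (integral_add_adjacent_intervals ((by fun_prop : Continuous _).intervalIntegrable _ _)
      ((by fun_prop : Continuous _).intervalIntegrable _ _)).symm
  have hcomparison : ∀ K < 0, ∀ {δ}, 0 < δ → a + δ ≤ b → Tendsto (fun n : ℝ =>
      √n * ((∫ x in a..a + δ, exp (n * (K / 2 * (x - a) ^ 2))) + ∫ x in a + δ..b, exp (n * f x)))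
      atTop (𝓝 √(π / (-2 * K))) := fun K hK δ hδ hδb => by
    simpa only [mul_add, add_zero] using (tendsto_sqrt_mul_integral_exp_quadratic hK a hδ).add
      (tendsto_sqrt_mul_integral_exp_of_neg hf.continuousOn hδb
        fun x hx => hneg x ⟨by linarith [hx.1], hx.2⟩)
  have hinterval : ∀ {P : ℝ → Prop}, (∀ᶠ x in 𝓝[≥] a, P x) →
      ∃ δ > 0, a + δ ≤ b ∧ ∀ x ∈ Icc a (a + δ), P x := fun hP => by
    obtain ⟨u, hau, hu⟩ := mem_nhdsGE_iff_exists_Icc_subset.1 (hP.and (Icc_mem_nhdsGE hab))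
    exact ⟨u - a, by linarith, by simpa using (hu (right_mem_Icc.2 hau.le)).2.2,
      fun x hx => (hu (by simpa using hx)).1⟩
  refine tendsto_nhds_of_frequently_bounds (G := fun K => √(π / (-2 * K)))
    (by fun_prop (disch := linarith)) ?_ ?_
  · refine (Eventually.frequently ?_).filter_mono (nhdsWithin_le_nhds (s := Iio K₀))
    filter_upwards [self_mem_nhdsWithin] with K (hK : K < K₀)
    obtain ⟨δ, hδ, hδb, hquad⟩ := hinterval (hlower K hK)
    refine ⟨_, hcomparison K (hK.trans hK₀) hδ hδb, ?_⟩
    filter_upwards [eventually_ge_atTop 0] with n hn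
    rw [hsplit hδ hδb]
    gcongr
    exact integral_exp_mul_le_integral_exp_mul (by fun_prop) hf (by linarith) hn hquad
  · refine (Eventually.frequently ?_).filter_mono (nhdsWithin_le_nhds (s := Ioi K₀))
    filter_upwards [Ioo_mem_nhdsGT hK₀] with K ⟨hK, hK0⟩
    obtain ⟨δ, hδ, hδb, hquad⟩ := hinterval (hupper K hK)
    refine ⟨_, hcomparison K hK0 hδ hδb, ?_⟩
    filter_upwards [eventually_ge_atTop 0] with n hn
    rw [hsplit hδ hδb]
    gcongr
    exact integral_exp_mul_le_integral_exp_mul hf (by fun_prop) (by linarith) hn hquad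

/-- endpoint Laplace method:
`∫ₐᵇ e^{n h} ∼ e^{n h(a)} √(π/(-2 n h''(a)))` as `n → ∞`. -/
theorem stmt_14 (a b : ℝ) (hab : a < b)
    (h : ℝ → ℝ) (hh : ContDiff ℝ 2 h)
    (hmax : ∀ τ ∈ Set.Ioc a b, h τ < h a)
    (h'a : deriv h a = 0) (h''a : deriv (deriv h) a < 0) :
    Filter.Tendsto
      (fun n : ℝ => (∫ τ in a..b, Real.exp (n * h τ)) /
        (Real.exp (n * h a) * Real.sqrt (π / (-2 * n * deriv (deriv h) a))))
      Filter.atTop (nhds 1) := by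
  have hlaplace := tendsto_sqrt_mul_integral_exp_laplace (f := fun τ => h τ - h a) hab
    (hh.continuous.sub continuous_const)
    (fun τ hτ => sub_neg.2 (hmax τ hτ)) h''a
    (fun _ hK => eventually_nhdsGE_le_sub_of_lt_deriv_deriv hh h'a hK)
    (fun _ hK => eventually_nhdsGE_sub_le_of_deriv_deriv_lt hh h'a hK)
  have hG : 0 < √(π / (-2 * deriv (deriv h) a)) := sqrt_pos.2 (div_pos pi_pos (by linarith))
  rw [← div_self hG.ne']
  refine (hlaplace.div_const _).congr' ?_
  filter_upwards [eventually_gt_atTop 0] with n hn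
  have hint : ∫ τ in a..b, exp (n * (h τ - h a)) =
      (∫ τ in a..b, exp (n * h τ)) / exp (n * h a) := by
    simp only [mul_sub, exp_sub, intervalIntegral.integral_div]
  have hsqrt : √(π / (-2 * n * deriv (deriv h) a)) = √(π / (-2 * deriv (deriv h) a)) / √n := by
    rw [← sqrt_div' _ hn.le, div_div, mul_right_comm]
  rw [hint, hsqrt]
  field_simp
end

section
/- Let c > 0, t > 0, and y : [0,t] → ℝ be C² with sup|y'| < c. For x ∈ (-ct, y(t)), set h₊(τ) = -(1/2)(x - y(τ) + c(t-τ))² and let τ₊(x) be the retarded time with x = y(τ₊) - c(t-τ₊). Then h₊ attains its maximum value 0 on [0,t] uniquely at τ₊(x), with h₊'(τ₊(x)) = 0 and h₊''(τ₊(x)) = -(c + y'(τ₊(x)))² < 0. -/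
/-!
Write `h₊ = -(1/2) g²` with `g τ = x - y τ + c (t - τ)`. The retarded time is a zero of `g`, and
`g' = -(c + y') < 0` because `|y'| < c`, so `g` is strictly decreasing on `[0, t]` and vanishes
only at `τ₊`; hence `h₊ < 0` elsewhere. At a zero of `g` we get `h₊' = -g g' = 0` and
`h₊'' = -(g')² - g g'' = -(g')² = -(c + y')²`.
-/

section NegHalfSq

variable {g : ℝ → ℝ} {a : ℝ}

theorem hasDerivAt_neg_half_sq_of_eq_zero {g' : ℝ} (hg : HasDerivAt g g' a) (ha : g a = 0) :
    HasDerivAt (fun τ => -(1/2) * g τ ^ 2) 0 a := by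
  simpa [ha] using (hg.pow 2).const_mul (-(1/2) : ℝ)

theorem deriv_neg_half_sq (hg : Differentiable ℝ g) :
    deriv (fun τ => -(1/2) * g τ ^ 2) = fun τ => -(g τ * deriv g τ) := by
  funext τ
  refine (((hg τ).hasDerivAt.pow 2).const_mul (-(1/2) : ℝ)).deriv.trans ?_
  ring

theorem deriv_deriv_neg_half_sq_of_eq_zero (hg : Differentiable ℝ g)
    (hg' : DifferentiableAt ℝ (deriv g) a) (ha : g a = 0) :
    deriv (deriv fun τ => -(1/2) * g τ ^ 2) a = -(deriv g a) ^ 2 := by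
  have hd : HasDerivAt (fun τ => -(g τ * deriv g τ))
      (-(deriv g a * deriv g a + g a * deriv (deriv g) a)) a :=
    ((hg a).hasDerivAt.mul hg'.hasDerivAt).neg
  rw [deriv_neg_half_sq hg, hd.deriv, ha]
  ring

theorem neg_half_sq_neg_of_injOn {s : Set ℝ} (hg : Set.InjOn g s) (ha : a ∈ s) (ha0 : g a = 0)
    {b : ℝ} (hb : b ∈ s) (hba : b ≠ a) : -(1/2) * g b ^ 2 < 0 := by
  have hgb : g b ≠ 0 := fun hb0 => hba (hg hb ha (hb0.trans ha0.symm))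
  have := pow_pos (abs_pos.mpr hgb) 2
  rw [sq_abs] at this
  linarith

end NegHalfSq

section LightConeGap

variable {c t x : ℝ} {y : ℝ → ℝ}

theorem hasDerivAt_lightConeGap {τ : ℝ} (hy : DifferentiableAt ℝ y τ) :
    HasDerivAt (fun τ => x - y τ + c * (t - τ)) (-(deriv y τ + c)) τ := by
  refine (((hasDerivAt_const τ x).sub hy.hasDerivAt).add
    (((hasDerivAt_const τ t).sub (hasDerivAt_id τ)).const_mul c)).congr_deriv ?_
  ring

theorem strictAntiOn_lightConeGap {s : Set ℝ} (hs : Convex ℝ s) (hy : Differentiable ℝ y)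
    (hv : ∀ τ ∈ interior s, -c < deriv y τ) :
    StrictAntiOn (fun τ => x - y τ + c * (t - τ)) s := by
  refine strictAntiOn_of_deriv_neg hs
    (fun τ _ => (hasDerivAt_lightConeGap (hy τ)).continuousAt.continuousWithinAt) fun τ hτ => ?_
  rw [(hasDerivAt_lightConeGap (hy τ)).deriv]
  linarith [hv τ hτ]

end LightConeGap

theorem stmt_15_general (c t x : ℝ)
    (y : ℝ → ℝ) (hy : ContDiff ℝ 2 y)
    (vbar : ℝ) (hv : ∀ τ ∈ Set.Icc (0:ℝ) t, |deriv y τ| ≤ vbar) (hvc : vbar < c)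
    (τp : ℝ) (hτp : τp ∈ Set.Icc (0:ℝ) t) (hτx : x = y τp - c*(t - τp))
    (h : ℝ → ℝ) (hh : ∀ τ, h τ = -(1/2) * (x - y τ + c*(t - τ))^2) :
    h τp = 0 ∧
    (∀ s ∈ Set.Icc (0:ℝ) t, s ≠ τp → h s < 0) ∧
    HasDerivAt h 0 τp ∧
    deriv (deriv h) τp = -(c + deriv y τp)^2 ∧
    deriv (deriv h) τp < 0 := by
  set g : ℝ → ℝ := fun τ => x - y τ + c * (t - τ)
  have hhg : h = fun τ => -(1/2) * g τ ^ 2 := funext hh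
  have hy1 : Differentiable ℝ y := hy.differentiable (by norm_num)
  have hg0 : g τp = 0 := by simp only [g]; linarith
  have hg' : deriv g = fun τ => -(deriv y τ + c) :=
    funext fun τ => (hasDerivAt_lightConeGap (hy1 τ)).deriv
  have hspeed : ∀ τ ∈ Set.Icc 0 t, -c < deriv y τ := fun τ hτ => by
    linarith [(abs_le.mp (hv τ hτ)).1]
  have hanti : StrictAntiOn g (Set.Icc 0 t) := strictAntiOn_lightConeGap (convex_Icc 0 t) hy1
    fun τ hτ => hspeed τ (interior_subset hτ)
  have hdd : DifferentiableAt ℝ (deriv g) τp := by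
    rw [hg']
    exact ((hy.differentiable_deriv_two τp).add_const c).neg
  have h2 : deriv (deriv h) τp = -(c + deriv y τp) ^ 2 := by
    rw [hhg, deriv_deriv_neg_half_sq_of_eq_zero
      (fun τ => (hasDerivAt_lightConeGap (hy1 τ)).differentiableAt) hdd hg0, hg']
    ring
  refine ⟨by rw [hhg]; simp [hg0], fun s hs hsτ => ?_, ?_, h2, ?_⟩
  · rw [hhg]
    exact neg_half_sq_neg_of_injOn hanti.injOn hτp hg0 hs hsτ
  · rw [hhg]
    exact hasDerivAt_neg_half_sq_of_eq_zero (hasDerivAt_lightConeGap (hy1 τp)) hg0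
  · rw [h2, neg_lt_zero]
    exact pow_pos (by linarith [hspeed τp hτp]) 2

/-- the Laplace exponent `h₊(τ) = -(1/2)(x - y τ + c(t-τ))²` attains
its maximum `0` on `[0,t]` uniquely at the retarded time `τ₊`, with
`h₊'(τ₊) = 0` and `h₊''(τ₊) = -(c + y'(τ₊))² < 0`. -/
theorem stmt_15 (c t x : ℝ) (hc : 0 < c) (ht : 0 < t)
    (y : ℝ → ℝ) (hy : ContDiff ℝ 2 y) (h0 : y 0 = 0)
    (vbar : ℝ) (hv : ∀ τ ∈ Set.Icc (0:ℝ) t, |deriv y τ| ≤ vbar) (hvc : vbar < c)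
    (hx : x ∈ Set.Ioo (-(c*t)) (y t))
    (τp : ℝ) (hτp : τp ∈ Set.Icc (0:ℝ) t) (hτx : x = y τp - c*(t - τp))
    (h : ℝ → ℝ) (hh : ∀ τ, h τ = -(1/2) * (x - y τ + c*(t - τ))^2) :
    h τp = 0 ∧
    (∀ s ∈ Set.Icc (0:ℝ) t, s ≠ τp → h s < 0) ∧
    HasDerivAt h 0 τp ∧
    deriv (deriv h) τp = -(c + deriv y τp)^2 ∧
    deriv (deriv h) τp < 0 :=
  stmt_15_general c t x y hy vbar hv hvc τp hτp hτx h hh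
end
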